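/- arXiv:1108.3734 — 7 statements merged into one kernel-verified Lean document; each statement's English description precedes it below -/
import Mathlib

section
/- Let 2 ≤ l ≤ 8. Then the group of K-isometries of L_l coincides with the Weyl group W_l; that is, every ℤ-linear automorphism of L_l preserving B and fixing k is a product of reflections s_d with d ∈ Φ_l, and conversely every element of W_l preserves B and fixes k. -/
def interForm (l : ℕ) (x y : Fin (l + 1) → ℤ) : ℤ :=
  ∑ i : Fin (l + 1), (if i = 0 then 1 else -1) * x i * y i

def canonClass (l : ℕ) : Fin (l + 1) → ℤ := fun i => if i = 0 then -3 else 1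

/-!
Reflections in roots preserve `B` and fix `k`, so `W_l` consists of `K`-isometries.

Conversely, let `φ` be a `K`-isometry fixing the exceptional curves `e_i` for `i ∉ s`, and let
`t ∈ s`. Then `E = φ e_t` is an exceptional class (`E² = E·k = -1`) supported on `s`, and some
`w ∈ W_l` fixing these `e_i` maps it back to `e_t`: for `l ≤ 8` the degree `E₀` is nonnegative
and, when `|s| ≥ 3`, Noether's inequality gives a root `e₀ - e_p - e_q - e_r` whose reflection
lowers it; when `|s| ≤ 2` Cauchy–Schwarz already forces `E₀ = 0`. In degree `0`, `E` is some `e_i`,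
sent to `e_t` by the reflection in `e_i - e_t`. Now `wφ` fixes `e_t` as well, and by induction on
`s` we reach a `K`-isometry fixing every `e_i`; fixing `k` too, it is the identity.
-/

open Finset

/-- Noether's inequality. If the three largest values `m p ≥ m q ≥ m r` added up to at most `a`,
then `∑ m² ≤ m p² + m q² + m r² + m r * (3a - 1 - m p - m q - m r) < a² + 1`. -/
theorem exists_three_add_gt {ι : Type*} [DecidableEq ι] {s : Finset ι} (hs : 3 ≤ #s)
    {m : ι → ℤ} (hm : ∀ i ∈ s, 0 ≤ m i) {a : ℤ} (hsum : ∑ i ∈ s, m i = 3 * a - 1)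
    (hsum_sq : ∑ i ∈ s, m i ^ 2 = a ^ 2 + 1) :
    ∃ p ∈ s, ∃ q ∈ s, ∃ r ∈ s, p ≠ q ∧ p ≠ r ∧ q ≠ r ∧ a < m p + m q + m r := by
  obtain ⟨p, hp, hpmax⟩ := exists_max_image s m (card_pos.1 (by omega))
  obtain ⟨q, hq, hqmax⟩ := exists_max_image (s.erase p) m
    (card_pos.1 (by rw [card_erase_of_mem hp]; omega))
  obtain ⟨r, hr, hrmax⟩ := exists_max_image ((s.erase p).erase q) m
    (card_pos.1 (by rw [card_erase_of_mem hq, card_erase_of_mem hp]; omega))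
  have hqp := ne_of_mem_erase hq
  have hrq := ne_of_mem_erase hr
  have hrp := ne_of_mem_erase (mem_of_mem_erase hr)
  refine ⟨p, hp, q, mem_of_mem_erase hq, r, mem_of_mem_erase (mem_of_mem_erase hr),
    hqp.symm, hrp.symm, hrq.symm, ?_⟩
  set t := ((s.erase p).erase q).erase r
  have hsplit : ∀ f : ι → ℤ, ∑ i ∈ s, f i = f p + f q + f r + ∑ i ∈ t, f i := fun f => by
    rw [← add_sum_erase s f hp, ← add_sum_erase _ f hq, ← add_sum_erase _ f hr]
    ring
  have hR : 0 ≤ ∑ i ∈ t, m i :=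
    sum_nonneg fun i hi => hm i (mem_of_mem_erase (mem_of_mem_erase (mem_of_mem_erase hi)))
  have hQ : ∑ i ∈ t, m i ^ 2 ≤ m r * ∑ i ∈ t, m i := by
    rw [mul_sum]
    refine sum_le_sum fun i hi => ?_
    have := hm i (mem_of_mem_erase (mem_of_mem_erase (mem_of_mem_erase hi)))
    nlinarith [hrmax i (mem_of_mem_erase hi)]
  have hA := hpmax q (mem_of_mem_erase hq)
  have hB := hqmax r (mem_of_mem_erase hr)
  have hC := hm r (mem_of_mem_erase (mem_of_mem_erase hr))
  rw [hsplit] at hsum hsum_sq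
  by_contra! h
  nlinarith [mul_nonneg (by linarith : (0 : ℤ) ≤ a - m p - m q - m r)
      (by linarith : (0 : ℤ) ≤ a + m p + m q - 3 * m r),
    mul_nonneg (sub_nonneg.2 hA) (sub_nonneg.2 hB), mul_nonneg hC (sub_nonneg.2 hB),
    mul_nonneg hC (sub_nonneg.2 hA)]

namespace PicardLattice

variable {l : ℕ} {s : Finset (Fin l)} {t : Fin l} {d E F : Fin (l + 1) → ℤ}
  {φ : (Fin (l + 1) → ℤ) ≃ₗ[ℤ] (Fin (l + 1) → ℤ)}

def interBilin (l : ℕ) : LinearMap.BilinForm ℤ (Fin (l + 1) → ℤ) :=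
  LinearMap.mk₂ ℤ (interForm l)
    (fun x y z => by simp only [interForm, Pi.add_apply, mul_add, add_mul, sum_add_distrib])
    (fun c x y => by
      simp only [interForm, Pi.smul_apply, smul_eq_mul, mul_sum]
      exact sum_congr rfl fun _ _ => by ring)
    (fun x y z => by simp only [interForm, Pi.add_apply, mul_add, sum_add_distrib])
    (fun c x y => by
      simp only [interForm, Pi.smul_apply, smul_eq_mul, mul_sum]
      exact sum_congr rfl fun _ _ => by ring)

local notation "⟪" x ", " y "⟫" => interBilin _ x y

lemma interBilin_eq_interForm (x y : Fin (l + 1) → ℤ) : ⟪x, y⟫ = interForm l x y := rfl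

lemma interBilin_comm (x y : Fin (l + 1) → ℤ) : ⟪x, y⟫ = ⟪y, x⟫ :=
  (sum_congr rfl fun _ _ => by ring : interForm l x y = interForm l y x)

lemma interBilin_apply (x y : Fin (l + 1) → ℤ) :
    ⟪x, y⟫ = x 0 * y 0 - ∑ i : Fin l, x i.succ * y i.succ := by
  simp [interBilin_eq_interForm, interForm, Fin.sum_univ_succ, Fin.succ_ne_zero, sub_eq_add_neg]

lemma interBilin_canonClass (x : Fin (l + 1) → ℤ) :
    ⟪x, canonClass l⟫ = -3 * x 0 - ∑ i : Fin l, x i.succ := by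
  simp only [interBilin_apply, canonClass, Fin.succ_ne_zero, if_true, if_false, mul_one]
  ring

def lineClass (l : ℕ) : Fin (l + 1) → ℤ := Pi.single 0 1

/-- The class `e_{i+1}`: exceptional curves are indexed by `Fin l`, from `0`. -/
def exceptionalCurve (i : Fin l) : Fin (l + 1) → ℤ := Pi.single i.succ 1

lemma exceptionalCurve_apply_zero (i : Fin l) : exceptionalCurve i 0 = 0 :=
  Pi.single_eq_of_ne (Fin.succ_ne_zero i).symm 1

lemma exceptionalCurve_apply_succ (i j : Fin l) :
    exceptionalCurve i j.succ = if j = i then 1 else 0 := by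
  simp [exceptionalCurve, Pi.single_apply]

lemma interBilin_lineClass (y : Fin (l + 1) → ℤ) : ⟪lineClass l, y⟫ = y 0 := by
  simp [interBilin_apply, lineClass, Fin.succ_ne_zero]

lemma interBilin_exceptionalCurve (i : Fin l) (y : Fin (l + 1) → ℤ) :
    ⟪exceptionalCurve i, y⟫ = -y i.succ := by
  simp [interBilin_apply, exceptionalCurve_apply_zero, exceptionalCurve_apply_succ]

def IsRoot (d : Fin (l + 1) → ℤ) : Prop := ⟪d, d⟫ = -2 ∧ ⟪d, canonClass l⟫ = 0

def IsExceptional (E : Fin (l + 1) → ℤ) : Prop := ⟪E, E⟫ = -1 ∧ ⟪E, canonClass l⟫ = -1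

def kIsometries (l : ℕ) : Subgroup ((Fin (l + 1) → ℤ) ≃ₗ[ℤ] (Fin (l + 1) → ℤ)) where
  carrier := {φ | (∀ x y, ⟪φ x, φ y⟫ = ⟪x, y⟫) ∧ φ (canonClass l) = canonClass l}
  mul_mem' := fun ⟨hφ, hφk⟩ ⟨hψ, hψk⟩ =>
    ⟨fun x y => (hφ _ _).trans (hψ x y), (congrArg _ hψk).trans hφk⟩
  one_mem' := ⟨fun _ _ => rfl, rfl⟩
  inv_mem' := fun {φ} ⟨hφ, hφk⟩ =>
    ⟨fun x y => by simpa using (hφ (φ.symm x) (φ.symm y)).symm,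
      φ.symm_apply_eq.2 hφk.symm⟩

def weylGroup (l : ℕ) : Subgroup ((Fin (l + 1) → ℤ) ≃ₗ[ℤ] (Fin (l + 1) → ℤ)) :=
  Subgroup.closure {ψ | ∃ d, ⟪d, d⟫ = -2 ∧ ⟪d, canonClass l⟫ = 0 ∧ ∀ x, ψ x = x + ⟪d, x⟫ • d}

def reflection (d : Fin (l + 1) → ℤ) (hd : ⟪d, d⟫ = -2) :
    (Fin (l + 1) → ℤ) ≃ₗ[ℤ] (Fin (l + 1) → ℤ) :=
  Module.reflection (f := -interBilin l d) (x := d) (by simp [hd])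

lemma reflection_apply (hd : ⟪d, d⟫ = -2) (x : Fin (l + 1) → ℤ) :
    reflection d hd x = x + ⟪d, x⟫ • d := by
  simp [reflection, Module.reflection_apply, sub_eq_add_neg]

lemma reflection_apply_of_interBilin_eq_zero {x : Fin (l + 1) → ℤ} (hd : ⟪d, d⟫ = -2)
    (hx : ⟪d, x⟫ = 0) : reflection d hd x = x := by
  simp [reflection_apply, hx]

lemma reflection_mem_weylGroup (hd : IsRoot d) : reflection d hd.1 ∈ weylGroup l :=
  Subgroup.subset_closure ⟨d, hd.1, hd.2, reflection_apply hd.1⟩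

lemma weylGroup_le_kIsometries : weylGroup l ≤ kIsometries l := by
  refine Subgroup.closure_le _ |>.2 ?_
  rintro ψ ⟨d, hdd, hdk, hψ⟩
  refine ⟨fun x y => ?_, by simp [hψ, hdk]⟩
  simp only [hψ, map_add, map_smul, LinearMap.add_apply, LinearMap.smul_apply, smul_eq_mul, hdd,
    interBilin_comm x d]
  ring

lemma IsExceptional.map (hφ : φ ∈ kIsometries l) (hE : IsExceptional E) :
    IsExceptional (φ E) := by
  refine ⟨(hφ.1 E E).trans hE.1, ?_⟩
  rw [← hφ.2, hφ.1, hE.2]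

lemma isExceptional_exceptionalCurve (i : Fin l) : IsExceptional (exceptionalCurve i) := by
  simp [IsExceptional, interBilin_exceptionalCurve, exceptionalCurve_apply_succ, canonClass,
    Fin.succ_ne_zero]

lemma IsExceptional.sum_sq (hE : IsExceptional E) :
    ∑ i : Fin l, E i.succ ^ 2 = E 0 ^ 2 + 1 := by
  have := hE.1
  rw [interBilin_apply] at this
  simp only [sq]
  linarith

lemma IsExceptional.sum (hE : IsExceptional E) :
    ∑ i : Fin l, E i.succ = 1 - 3 * E 0 := by
  have := hE.2
  rw [interBilin_canonClass] at this
  linarith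

def supportedOn (s : Finset (Fin l)) : Submodule ℤ (Fin (l + 1) → ℤ) where
  carrier := {x | ∀ i ∉ s, x i.succ = 0}
  add_mem' hx hy i hi := by simp [hx i hi, hy i hi]
  zero_mem' _ _ := rfl
  smul_mem' c x hx i hi := by simp [hx i hi]

lemma lineClass_mem_supportedOn (s : Finset (Fin l)) : lineClass l ∈ supportedOn s :=
  fun i _ => Pi.single_eq_of_ne (Fin.succ_ne_zero i) 1

lemma exceptionalCurve_mem_supportedOn {i : Fin l} (hi : i ∈ s) :
    exceptionalCurve i ∈ supportedOn s :=
  fun j hj => by simp [exceptionalCurve_apply_succ, show j ≠ i by rintro rfl; exact hj hi]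

lemma sum_eq_of_mem_supportedOn {x : Fin (l + 1) → ℤ} (hx : x ∈ supportedOn s) {f : ℤ → ℤ}
    (hf : f 0 = 0) :
    ∑ i ∈ s, f (x i.succ) = ∑ i : Fin l, f (x i.succ) :=
  sum_subset (subset_univ s) fun i _ hi => by rw [hx i hi, hf]

lemma sq_le_mul_of_mem_supportedOn {n : ℕ} (hn : #s ≤ n)
    {x : Fin (l + 1) → ℤ} (hx : x ∈ supportedOn s) :
    (⟪x, canonClass l⟫ + 3 * x 0) ^ 2 ≤ n * (x 0 ^ 2 - ⟪x, x⟫) := by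
  have hcs := sq_sum_le_card_mul_sum_sq (s := s) (f := fun i => x i.succ)
  have hsum : ∑ i ∈ s, x i.succ = ∑ i : Fin l, x i.succ :=
    sum_eq_of_mem_supportedOn hx (f := id) rfl
  have hsum_sq : ∑ i ∈ s, x i.succ ^ 2 = ∑ i : Fin l, x i.succ ^ 2 :=
    sum_eq_of_mem_supportedOn hx (f := (· ^ 2)) (zero_pow two_ne_zero)
  rw [hsum, hsum_sq] at hcs
  have hn' : (#s : ℤ) ≤ n := by exact_mod_cast hn
  have hsq : 0 ≤ ∑ i : Fin l, x i.succ ^ 2 := by positivity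
  rw [interBilin_canonClass, interBilin_apply]
  simp only [← sq]
  nlinarith [mul_le_mul_of_nonneg_right hn' hsq]

lemma IsExceptional.coord_zero_nonneg (h8 : l ≤ 8) (hE : IsExceptional E) : 0 ≤ E 0 := by
  have hcs := sq_le_mul_of_mem_supportedOn (s := univ) (n := 8) (by simpa using h8)
    (x := E) fun i hi => absurd (mem_univ i) hi
  rw [hE.1, hE.2, Nat.cast_ofNat] at hcs
  have hsq : ∑ i : Fin l, E i.succ ≤ ∑ i : Fin l, E i.succ ^ 2 :=
    sum_le_sum fun i _ => Int.le_self_sq _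
  rw [hE.sum, hE.sum_sq] at hsq
  have : -1 ≤ E 0 := by nlinarith
  rcases this.eq_or_lt with h | h
  · rw [← h] at hsq
    norm_num at hsq
  · omega

lemma IsExceptional.coord_succ_nonpos (h8 : l ≤ 8) (hE : IsExceptional E)
    (ha : 0 < E 0) (i : Fin l) : E i.succ ≤ 0 := by
  by_contra! hi
  have hcard : (#(univ.erase i) : ℤ) ≤ 7 := by
    have := card_erase_add_one (mem_univ i)
    rw [card_univ, Fintype.card_fin] at this
    omega
  have hrest : 0 ≤ E 0 ^ 2 + 1 - E i.succ ^ 2 := by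
    rw [← hE.sum_sq, ← sum_erase_eq_sub (mem_univ i)]
    positivity
  have hcs := sq_sum_le_card_mul_sum_sq (s := univ.erase i) (f := fun j => E j.succ)
  rw [sum_erase_eq_sub (mem_univ i), sum_erase_eq_sub (mem_univ i), hE.sum, hE.sum_sq] at hcs
  nlinarith [mul_le_mul_of_nonneg_right hcard hrest]

lemma IsExceptional.exists_eq_exceptionalCurve (hE : IsExceptional E) (ha : E 0 = 0) :
    ∃ i, E = exceptionalCurve i := by
  have hsq := hE.sum_sq
  have hsum := hE.sum
  rw [ha] at hsq hsum
  have hbin : ∀ j : Fin l, E j.succ * (E j.succ - 1) = 0 := by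
    have h : ∑ j : Fin l, E j.succ * (E j.succ - 1) = 0 := by
      simp only [mul_sub, mul_one, sum_sub_distrib, ← sq, hsq, hsum]
      ring
    intro j
    refine (sum_eq_zero_iff_of_nonneg (fun j _ => ?_)).1 h j (mem_univ j)
    rcases le_or_gt (E j.succ) 0 with h | h <;> nlinarith
  obtain ⟨i, -, hi⟩ := exists_ne_zero_of_sum_ne_zero (s := univ)
    (f := fun j : Fin l => E j.succ) (by omega)
  have hEi : E i.succ = 1 := by
    rcases mul_eq_zero.1 (hbin i) with h | h
    exacts [absurd h hi, by omega]
  have hrest : ∀ j ∈ univ.erase i, E j.succ = 0 := by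
    refine (sum_eq_zero_iff_of_nonneg fun j _ => ?_).1 ?_
    · rcases mul_eq_zero.1 (hbin j) with h | h <;> omega
    · rw [sum_erase_eq_sub (mem_univ i), hsum, hEi]
      norm_num
  refine ⟨i, funext fun j => Fin.cases ?_ (fun j => ?_) j⟩
  · rw [ha, exceptionalCurve_apply_zero]
  · rw [exceptionalCurve_apply_succ]
    split_ifs with hji
    · rw [hji, hEi]
    · exact hrest j (mem_erase.2 ⟨hji, mem_univ j⟩)

lemma IsExceptional.coord_zero_eq_zero_of_card_le_one (hs : #s ≤ 1)
    (hE : IsExceptional E) (hEs : E ∈ supportedOn s) : E 0 = 0 := by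
  have hcs := sq_le_mul_of_mem_supportedOn hs hEs
  rw [hE.1, hE.2, Nat.cast_one] at hcs
  have : 0 ≤ E 0 := by nlinarith
  have : E 0 ≤ 0 := by nlinarith
  omega

/-- Cauchy–Schwarz for `E + F` bounds `E 0 + F 0 ∈ {0, 1}`, and for the root `E - F` it forces
`E 0 = F 0`. -/
lemma IsExceptional.coord_zero_eq_zero_of_card_le_two (hs : #s ≤ 2) (hE : IsExceptional E)
    (hF : IsExceptional F) (hEs : E ∈ supportedOn s) (hFs : F ∈ supportedOn s)
    (hEF : ⟪E, F⟫ = 0) : E 0 = 0 := by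
  have hadd := sq_le_mul_of_mem_supportedOn hs (add_mem hEs hFs)
  have hsub := sq_le_mul_of_mem_supportedOn hs (sub_mem hEs hFs)
  simp only [map_add, map_sub, LinearMap.add_apply, LinearMap.sub_apply, Pi.add_apply,
    Pi.sub_apply, hE.1, hE.2, hF.1, hF.2, hEF, interBilin_comm F E] at hadd hsub
  norm_num at hadd hsub
  have : E 0 - F 0 ≤ 0 := by nlinarith
  have : 0 ≤ E 0 - F 0 := by nlinarith
  have : 0 ≤ E 0 + F 0 := by nlinarith
  have : E 0 + F 0 ≤ 1 := by nlinarith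
  omega

lemma interBilin_exceptionalCurve_sub (i j : Fin l) (y : Fin (l + 1) → ℤ) :
    ⟪exceptionalCurve i - exceptionalCurve j, y⟫ = y j.succ - y i.succ := by
  simp only [map_sub, LinearMap.sub_apply, interBilin_exceptionalCurve]
  ring

lemma isRoot_exceptionalCurve_sub {i j : Fin l} (hij : i ≠ j) :
    IsRoot (exceptionalCurve i - exceptionalCurve j) := by
  refine ⟨?_, ?_⟩ <;> rw [interBilin_exceptionalCurve_sub]
  · simp [exceptionalCurve_apply_succ, hij, hij.symm]
  · simp [canonClass, Fin.succ_ne_zero]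

lemma interBilin_lineClass_sub (p q r : Fin l) (y : Fin (l + 1) → ℤ) :
    ⟪lineClass l - exceptionalCurve p - exceptionalCurve q - exceptionalCurve r, y⟫ =
      y 0 + y p.succ + y q.succ + y r.succ := by
  simp only [map_sub, LinearMap.sub_apply, interBilin_lineClass, interBilin_exceptionalCurve]
  ring

lemma isRoot_lineClass_sub {p q r : Fin l} (hpq : p ≠ q) (hpr : p ≠ r) (hqr : q ≠ r) :
    IsRoot (lineClass l - exceptionalCurve p - exceptionalCurve q - exceptionalCurve r) := by
  refine ⟨?_, ?_⟩ <;> rw [interBilin_lineClass_sub]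
  · simp [exceptionalCurve_apply_succ, exceptionalCurve_apply_zero, lineClass, Fin.succ_ne_zero,
      hpq, hpr, hqr, hpq.symm, hpr.symm, hqr.symm]
  · simp [canonClass, Fin.succ_ne_zero]

lemma reflection_apply_exceptionalCurve (hd : ⟪d, d⟫ = -2) (hds : d ∈ supportedOn s)
    {i : Fin l} (hi : i ∉ s) :
    reflection d hd (exceptionalCurve i) = exceptionalCurve i := by
  refine reflection_apply_of_interBilin_eq_zero hd ?_
  rw [interBilin_comm, interBilin_exceptionalCurve, hds i hi, neg_zero]

lemma exists_weylGroup_apply_eq_of_coord_zero (ht : t ∈ s) (hE : IsExceptional E)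
    (hEs : E ∈ supportedOn s) (ha : E 0 = 0) :
    ∃ w ∈ weylGroup l, w E = exceptionalCurve t ∧
      ∀ i ∉ s, w (exceptionalCurve i) = exceptionalCurve i := by
  obtain ⟨i, rfl⟩ := hE.exists_eq_exceptionalCurve ha
  have hi : i ∈ s := by
    by_contra hi
    simpa [exceptionalCurve_apply_succ] using hEs i hi
  by_cases hit : i = t
  · exact ⟨1, one_mem _, by rw [hit]; rfl, fun _ _ => rfl⟩
  have hd := isRoot_exceptionalCurve_sub hit
  refine ⟨reflection _ hd.1, reflection_mem_weylGroup hd, ?_, fun j hj =>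
    reflection_apply_exceptionalCurve hd.1
      (sub_mem (exceptionalCurve_mem_supportedOn hi) (exceptionalCurve_mem_supportedOn ht)) hj⟩
  rw [reflection_apply, interBilin_exceptionalCurve_sub]
  simp [exceptionalCurve_apply_succ, Ne.symm hit]

lemma exists_weylGroup_apply_eq (h8 : l ≤ 8) (hs : 3 ≤ #s) (ht : t ∈ s) (hE : IsExceptional E)
    (hEs : E ∈ supportedOn s) :
    ∃ w ∈ weylGroup l, w E = exceptionalCurve t ∧
      ∀ i ∉ s, w (exceptionalCurve i) = exceptionalCurve i := by
  obtain ⟨n, hn⟩ : ∃ n : ℕ, E 0 ≤ n := ⟨(E 0).toNat, Int.self_le_toNat _⟩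
  induction n generalizing E with
  | zero =>
    exact exists_weylGroup_apply_eq_of_coord_zero ht hE hEs
      (le_antisymm (by exact_mod_cast hn) (hE.coord_zero_nonneg h8))
  | succ n ih =>
    rcases (hE.coord_zero_nonneg h8).eq_or_lt with ha | ha
    · exact exists_weylGroup_apply_eq_of_coord_zero ht hE hEs ha.symm
    obtain ⟨p, hp, q, hq, r, hr, hpq, hpr, hqr, hpqr⟩ := exists_three_add_gt hs
      (m := fun i => -E i.succ) (fun i _ => neg_nonneg.2 (hE.coord_succ_nonpos h8 ha i))
      (by rw [sum_eq_of_mem_supportedOn hEs (f := Neg.neg) neg_zero, sum_neg_distrib, hE.sum]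
          ring)
      (by rw [sum_eq_of_mem_supportedOn hEs (f := fun z => (-z) ^ 2) (by norm_num)]
          simpa using hE.sum_sq)
    have hd := isRoot_lineClass_sub hpq hpr hqr
    have hds : lineClass l - exceptionalCurve p - exceptionalCurve q - exceptionalCurve r ∈
        supportedOn s :=
      sub_mem (sub_mem (sub_mem (lineClass_mem_supportedOn s) (exceptionalCurve_mem_supportedOn hp))
        (exceptionalCurve_mem_supportedOn hq)) (exceptionalCurve_mem_supportedOn hr)
    obtain ⟨w, hw, hwE, hwfix⟩ := ih
      (hE.map (weylGroup_le_kIsometries (reflection_mem_weylGroup hd)))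
      (by rw [reflection_apply]; exact add_mem hEs (Submodule.smul_mem _ _ hds))
      (by
        rw [reflection_apply, interBilin_lineClass_sub]
        simp only [Pi.add_apply, Pi.smul_apply, smul_eq_mul, Pi.sub_apply, lineClass,
          exceptionalCurve_apply_zero, Pi.single_eq_same]
        push_cast at hn hpqr ⊢
        linarith)
    refine ⟨w * reflection _ hd.1, mul_mem hw (reflection_mem_weylGroup hd), hwE, fun i hi => ?_⟩
    rw [LinearEquiv.mul_apply, reflection_apply_exceptionalCurve hd.1 hds hi, hwfix i hi]

lemma eq_one_of_forall_apply_exceptionalCurve (hφ : φ ∈ kIsometries l)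
    (hfix : ∀ i, φ (exceptionalCurve i) = exceptionalCurve i) : φ = 1 := by
  ext x : 1
  have hsucc : ∀ i : Fin l, φ x i.succ = x i.succ := fun i => by
    have := hφ.1 (exceptionalCurve i) x
    rw [hfix, interBilin_exceptionalCurve, interBilin_exceptionalCurve] at this
    linarith
  have hzero : φ x 0 = x 0 := by
    have := hφ.1 x (canonClass l)
    rw [hφ.2, interBilin_canonClass, interBilin_canonClass] at this
    simp only [hsucc] at this
    linarith
  exact funext fun j => Fin.cases hzero hsucc j

lemma apply_exceptionalCurve_mem_supportedOn (hφ : φ ∈ kIsometries l)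
    (hfix : ∀ i ∉ s, φ (exceptionalCurve i) = exceptionalCurve i) (ht : t ∈ s) :
    φ (exceptionalCurve t) ∈ supportedOn s := fun i hi => by
  have := hφ.1 (exceptionalCurve i) (exceptionalCurve t)
  rw [hfix i hi, interBilin_exceptionalCurve, interBilin_exceptionalCurve,
    exceptionalCurve_apply_succ, if_neg (by rintro rfl; exact hi ht)] at this
  linarith

lemma exists_weylGroup_apply_apply_eq (h8 : l ≤ 8) (hφ : φ ∈ kIsometries l) (ht : t ∉ s)
    (hfix : ∀ i ∉ insert t s, φ (exceptionalCurve i) = exceptionalCurve i) :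
    ∃ w ∈ weylGroup l, w (φ (exceptionalCurve t)) = exceptionalCurve t ∧
      ∀ i ∉ insert t s, w (exceptionalCurve i) = exceptionalCurve i := by
  have hE := (isExceptional_exceptionalCurve t).map hφ
  have hEs := apply_exceptionalCurve_mem_supportedOn hφ hfix (mem_insert_self t s)
  rcases le_or_gt 3 #(insert t s) with hs | hs
  · exact exists_weylGroup_apply_eq h8 hs (mem_insert_self t s) hE hEs
  refine exists_weylGroup_apply_eq_of_coord_zero (mem_insert_self t s) hE hEs ?_
  rcases s.eq_empty_or_nonempty with rfl | ⟨u, hu⟩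
  · exact hE.coord_zero_eq_zero_of_card_le_one (by simp) hEs
  · have htu : t ≠ u := by rintro rfl; exact ht hu
    refine hE.coord_zero_eq_zero_of_card_le_two (by omega)
      ((isExceptional_exceptionalCurve u).map hφ) hEs
      (apply_exceptionalCurve_mem_supportedOn hφ hfix (mem_insert_of_mem hu)) ?_
    rw [hφ.1, interBilin_exceptionalCurve, exceptionalCurve_apply_succ, if_neg htu, neg_zero]

lemma mem_weylGroup_of_forall_apply_exceptionalCurve (h8 : l ≤ 8) (hφ : φ ∈ kIsometries l)
    (hfix : ∀ i ∉ s, φ (exceptionalCurve i) = exceptionalCurve i) : φ ∈ weylGroup l := by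
  induction s using Finset.induction_on generalizing φ with
  | empty =>
    rw [eq_one_of_forall_apply_exceptionalCurve hφ fun i => hfix i (notMem_empty i)]
    exact one_mem _
  | insert t s ht ih =>
    obtain ⟨w, hw, hwt, hwfix⟩ := exists_weylGroup_apply_apply_eq h8 hφ ht hfix
    have hwφ : w * φ ∈ weylGroup l := by
      refine ih (mul_mem (weylGroup_le_kIsometries hw) hφ) fun i hi => ?_
      rw [LinearEquiv.mul_apply]
      by_cases hit : i = t
      · rw [hit, hwt]
      · rw [hfix i (by simp [hit, hi]), hwfix i (by simp [hit, hi])]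
    simpa using mul_mem (inv_mem hw) hwφ

end PicardLattice

theorem kIsometries_eq_weylGroup_general (l : ℕ) (h8 : l ≤ 8)
    (φ : (Fin (l + 1) → ℤ) ≃ₗ[ℤ] (Fin (l + 1) → ℤ)) :
    ((∀ x y, interForm l (φ x) (φ y) = interForm l x y) ∧ φ (canonClass l) = canonClass l) ↔
      φ ∈ Subgroup.closure
        {ψ : (Fin (l + 1) → ℤ) ≃ₗ[ℤ] (Fin (l + 1) → ℤ) |
          ∃ d : Fin (l + 1) → ℤ, interForm l d d = -2 ∧ interForm l d (canonClass l) = 0 ∧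
            ∀ x, ψ x = x + interForm l d x • d} :=
  ⟨fun hφ => PicardLattice.mem_weylGroup_of_forall_apply_exceptionalCurve (s := Finset.univ) h8 hφ
      fun i hi => absurd (Finset.mem_univ i) hi,
    fun hφ => PicardLattice.weylGroup_le_kIsometries hφ⟩

/-- For `2 ≤ l ≤ 8`, a ℤ-linear automorphism `φ` of `L_l` is a `K`-isometry
(preserves `B` and fixes `k`) if and only if `φ` lies in the Weyl group, i.e.
the subgroup generated by the reflections `s_d : x ↦ x + B(d,x)·d`
for roots `d` (with `B(d,d) = -2` and `B(d,k) = 0`). -/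
theorem kIsometries_eq_weylGroup (l : ℕ) (h2 : 2 ≤ l) (h8 : l ≤ 8)
    (φ : (Fin (l + 1) → ℤ) ≃ₗ[ℤ] (Fin (l + 1) → ℤ)) :
    ((∀ x y, interForm l (φ x) (φ y) = interForm l x y) ∧ φ (canonClass l) = canonClass l) ↔
      φ ∈ Subgroup.closure
        {ψ : (Fin (l + 1) → ℤ) ≃ₗ[ℤ] (Fin (l + 1) → ℤ) |
          ∃ d : Fin (l + 1) → ℤ, interForm l d d = -2 ∧ interForm l d (canonClass l) = 0 ∧
            ∀ x, ψ x = x + interForm l d x • d} :=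
  kIsometries_eq_weylGroup_general l h8 φ
end

section
/- For l = 3, the root set is exactly Φ₃ = {±(e_i − e_j) : 1 ≤ i < j ≤ 3} ∪ {±(e₀ − e₁ − e₂ − e₃)}, so Φ₃ has exactly 8 elements, and the group of K-isometries of L₃ has order 12; it is isomorphic to the direct product of a cyclic group of order 2 with the symmetric group on 3 letters (the Weyl group of type A₁ × A₂). -/
/-- The group of `K`-isometries of `L_l`: ℤ-linear automorphisms preserving `B`
and fixing `k`, as a subgroup of the automorphism group. -/
def kIsoGroup (l : ℕ) : Subgroup ((Fin (l + 1) → ℤ) ≃ₗ[ℤ] (Fin (l + 1) → ℤ)) where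
  carrier := {φ | (∀ x y, interForm l (φ x) (φ y) = interForm l x y) ∧
    φ (canonClass l) = canonClass l}
  one_mem' := ⟨fun _ _ => rfl, rfl⟩
  mul_mem' := by
    intro a b ha hb
    refine ⟨fun x y => ?_, ?_⟩
    · show interForm l (a (b x)) (a (b y)) = interForm l x y
      rw [ha.1, hb.1]
    · show a (b (canonClass l)) = canonClass l
      rw [hb.2, ha.2]
  inv_mem' := by
    intro a ha
    refine ⟨fun x y => ?_, ?_⟩
    · show interForm l (a.symm x) (a.symm y) = interForm l x y
      conv_rhs => rw [← a.apply_symm_apply x, ← a.apply_symm_apply y, ha.1]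
    · show a.symm (canonClass l) = canonClass l
      conv_lhs => rw [← ha.2]
      exact a.symm_apply_apply _

/-- `e_i`: the `i`-th standard basis vector. -/
def stdVec (l : ℕ) (i : Fin (l + 1)) : Fin (l + 1) → ℤ := Pi.single i 1

/-!
Every root is found by bounding coordinates: if `d = (a, b, c, d₃)` is a root then
`b + c + d₃ = -3a`, and Cauchy–Schwarz turns `b² + c² + d₃² = a² + 2` into `a² ≤ 1`.
The same argument shows that a `K`-isometry `φ` sends `e₀` either to `e₀` or to
`2e₀ - e₁ - e₂ - e₃ = s(e₀)`, where `s` is the reflection in the root `e₀ - e₁ - e₂ - e₃`.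
An isometry fixing `e₀` and `k` permutes `e₁, e₂, e₃`, the only vectors `w` with `w² = -1`,
`w · k = -1` and `w · e₀ = 0`. Since `s` commutes with these permutations (they fix its root),
`(a, σ) ↦ sᵃ σ` is an isomorphism `C₂ × S₃ ≅ O_K(L₃)`.
-/

lemma exists_eq_single_of_sum_sq_eq_one {ι : Type*} [Fintype ι] [DecidableEq ι] {v : ι → ℤ}
    (hsq : ∑ i, v i ^ 2 = 1) (hsum : ∑ i, v i = 1) : ∃ i, v = Pi.single i 1 := by
  have hnonneg (i : ι) : 0 ≤ v i * (v i - 1) := by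
    rcases le_or_gt (v i) 0 with h | h <;> nlinarith
  have hbool (i : ι) : v i * (v i - 1) = 0 := by
    have h : ∑ i, v i * (v i - 1) = 0 := by
      simp only [mul_sub, mul_one, Finset.sum_sub_distrib, ← sq, hsq, hsum, sub_self]
    exact (Finset.sum_eq_zero_iff_of_nonneg fun i _ => hnonneg i).1 h i (Finset.mem_univ i)
  have hv (i : ι) : v i = 0 ∨ v i = 1 := by
    rcases mul_eq_zero.1 (hbool i) with h | h
    · exact .inl h
    · exact .inr (sub_eq_zero.1 h)
  obtain ⟨i, -, hi⟩ := Finset.exists_ne_zero_of_sum_ne_zero (s := Finset.univ) (f := v)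
    (by rw [hsum]; exact one_ne_zero)
  refine ⟨i, funext fun j => ?_⟩
  by_cases hji : j = i
  · subst hji
    simpa using (hv j).resolve_left hi
  · have hle := Finset.add_le_sum (f := v) (fun k _ => by rcases hv k with h | h <;> omega)
      (Finset.mem_univ i) (Finset.mem_univ j) (Ne.symm hji)
    have := hv i
    have := hv j
    simp only [Pi.single_apply, hji, if_false]
    omega

lemma Int.mem_Icc_of_mul_self_le_three {b : ℤ} (h : b * b ≤ 3) : b ∈ Set.Icc (-1) 1 := by
  constructor <;> nlinarith

def zmodTwoHom {G : Type*} [Group G] {s : G} (hs : s * s = 1) : Multiplicative (ZMod 2) →* G where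
  toFun a := s ^ (Multiplicative.toAdd a).val
  map_one' := pow_zero s
  map_mul' a b := by
    rw [toAdd_mul, ZMod.val_add, ← pow_eq_pow_mod _ (by rwa [sq]), pow_add]

lemma Multiplicative.zmod_two_eq_one_or (a : Multiplicative (ZMod 2)) : a = 1 ∨ a = .ofAdd 1 := by
  revert a
  decide

section AnyRank

variable {l : ℕ}

def rootSet (l : ℕ) : Set (Fin (l + 1) → ℤ) :=
  {d | interForm l d d = -2 ∧ interForm l d (canonClass l) = 0}

lemma interForm_comm (x y : Fin (l + 1) → ℤ) : interForm l x y = interForm l y x :=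
  Finset.sum_congr rfl fun _ _ => by ring

lemma interForm_eq_sub_sum (x y : Fin (l + 1) → ℤ) :
    interForm l x y = x 0 * y 0 - ∑ i : Fin l, x i.succ * y i.succ := by
  simp [interForm, Fin.sum_univ_succ, Fin.succ_ne_zero, sub_eq_add_neg]

lemma interForm_stdVec_left (i : Fin (l + 1)) (y : Fin (l + 1) → ℤ) :
    interForm l (stdVec l i) y = (if i = 0 then 1 else -1) * y i := by
  simp [interForm, stdVec, Pi.single_apply]

lemma stdVec_injective : Function.Injective (stdVec l) := fun i j h => by
  simpa [stdVec, Pi.single_apply] using congrFun h i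

def interBilin (l : ℕ) : LinearMap.BilinForm ℤ (Fin (l + 1) → ℤ) :=
  LinearMap.mk₂ ℤ (interForm l)
    (fun _ _ _ => by
      simp only [interForm, Pi.add_apply, ← Finset.sum_add_distrib]
      exact Finset.sum_congr rfl fun _ _ => by ring)
    (fun _ _ _ => by
      simp only [interForm, Pi.smul_apply, smul_eq_mul, Finset.mul_sum]
      exact Finset.sum_congr rfl fun _ _ => by ring)
    (fun _ _ _ => by
      simp only [interForm, Pi.add_apply, ← Finset.sum_add_distrib]
      exact Finset.sum_congr rfl fun _ _ => by ring)
    (fun _ _ _ => by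
      simp only [interForm, Pi.smul_apply, smul_eq_mul, Finset.mul_sum]
      exact Finset.sum_congr rfl fun _ _ => by ring)

@[simp]
lemma interBilin_apply (x y : Fin (l + 1) → ℤ) : interBilin l x y = interForm l x y := rfl

section Reflection

variable {r : Fin (l + 1) → ℤ} (hr : interForm l r r = -2)

def rootReflection : (Fin (l + 1) → ℤ) ≃ₗ[ℤ] (Fin (l + 1) → ℤ) :=
  Module.reflection (x := r) (f := -interBilin l r) (by simp [hr])

lemma rootReflection_apply (x : Fin (l + 1) → ℤ) :
    rootReflection hr x = x + interForm l r x • r := by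
  simp [rootReflection, Module.reflection_apply, sub_eq_add_neg]

lemma rootReflection_mul_self : rootReflection hr * rootReflection hr = 1 :=
  LinearEquiv.ext (Module.involutive_reflection _)

lemma interForm_rootReflection (x y : Fin (l + 1) → ℤ) :
    interForm l (rootReflection hr x) (rootReflection hr y) = interForm l x y := by
  simp only [rootReflection_apply, ← interBilin_apply, map_add, map_smul, LinearMap.add_apply,
    LinearMap.smul_apply, smul_eq_mul]
  simp only [interBilin_apply, hr, interForm_comm x r]
  ring

lemma commute_rootReflection {φ : (Fin (l + 1) → ℤ) ≃ₗ[ℤ] (Fin (l + 1) → ℤ)}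
    (hφ : φ ∈ kIsoGroup l) (hφr : φ r = r) : Commute φ (rootReflection hr) := by
  refine LinearEquiv.ext fun x => ?_
  have hB : interForm l r (φ x) = interForm l r x := by rw [← hφ.1 r x, hφr]
  simp only [LinearEquiv.mul_apply, rootReflection_apply, map_add, map_smul, hφr, hB]

end Reflection

def reflKIso {r : Fin (l + 1) → ℤ} (hr : r ∈ rootSet l) : kIsoGroup l :=
  ⟨rootReflection hr.1, interForm_rootReflection hr.1, by
    rw [rootReflection_apply, hr.2, zero_smul, add_zero]⟩

lemma reflKIso_mul_self {r : Fin (l + 1) → ℤ} (hr : r ∈ rootSet l) :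
    reflKIso hr * reflKIso hr = 1 :=
  Subtype.ext (rootReflection_mul_self hr.1)

def coordPerm (l : ℕ) :
    Equiv.Perm (Fin (l + 1)) →* ((Fin (l + 1) → ℤ) ≃ₗ[ℤ] (Fin (l + 1) → ℤ)) where
  toFun e := LinearEquiv.funCongrLeft ℤ ℤ e.symm
  map_one' := rfl
  map_mul' _ _ := rfl

lemma coordPerm_apply (e : Equiv.Perm (Fin (l + 1))) (x : Fin (l + 1) → ℤ) (i : Fin (l + 1)) :
    coordPerm l e x i = x (e.symm i) := rfl

lemma coordPerm_single (e : Equiv.Perm (Fin (l + 1))) (i : Fin (l + 1)) :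
    coordPerm l e (Pi.single i 1) = Pi.single (e i) 1 := by
  funext j
  simp [coordPerm_apply, Pi.single_apply, Equiv.symm_apply_eq]

lemma coordPerm_apply_ite {e : Equiv.Perm (Fin (l + 1))} (he : e 0 = 0) (a b : ℤ) :
    coordPerm l e (fun i => if i = 0 then a else b) = fun i => if i = 0 then a else b := by
  funext i
  simp [coordPerm_apply, Equiv.symm_apply_eq, he]

lemma coordPerm_mem_kIsoGroup {e : Equiv.Perm (Fin (l + 1))} (he : e 0 = 0) :
    coordPerm l e ∈ kIsoGroup l := by
  refine ⟨fun x y => ?_, coordPerm_apply_ite he (-3) 1⟩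
  simp only [interForm, coordPerm_apply]
  rw [← Equiv.sum_comp e]
  simp [e.injective.eq_iff' he]

def succPerm (l : ℕ) : Equiv.Perm (Fin l) →* Equiv.Perm (Fin (l + 1)) where
  toFun σ := Equiv.Perm.decomposeFin.symm (0, σ)
  map_one' := by ext i; cases i using Fin.cases <;> simp
  map_mul' σ τ := by ext i; cases i using Fin.cases <;> simp

@[simp]
lemma succPerm_apply_zero (σ : Equiv.Perm (Fin l)) : succPerm l σ 0 = 0 := by simp [succPerm]

@[simp]
lemma succPerm_apply_succ (σ : Equiv.Perm (Fin l)) (i : Fin l) :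
    succPerm l σ i.succ = (σ i).succ := by simp [succPerm]

def permKIso (l : ℕ) : Equiv.Perm (Fin l) →* kIsoGroup l :=
  ((coordPerm l).comp (succPerm l)).codRestrict (kIsoGroup l) fun σ =>
    coordPerm_mem_kIsoGroup (succPerm_apply_zero σ)

lemma permKIso_apply_stdVec (σ : Equiv.Perm (Fin l)) (i : Fin (l + 1)) :
    (permKIso l σ : (Fin (l + 1) → ℤ) ≃ₗ[ℤ] (Fin (l + 1) → ℤ)) (stdVec l i) =
      stdVec l (succPerm l σ i) :=
  coordPerm_single _ i

lemma permKIso_injective : Function.Injective (permKIso l) := by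
  refine (injective_iff_map_eq_one _).2 fun σ h => Equiv.ext fun i => ?_
  have := congrArg
    (fun φ : kIsoGroup l => (φ : (Fin (l + 1) → ℤ) ≃ₗ[ℤ] (Fin (l + 1) → ℤ)) (stdVec l i.succ)) h
  simp only [permKIso_apply_stdVec, OneMemClass.coe_one, LinearEquiv.coe_one, id] at this
  simpa using stdVec_injective this

lemma exists_eq_stdVec_succ {w : Fin (l + 1) → ℤ} (hww : interForm l w w = -1)
    (hwk : interForm l w (canonClass l) = -1) (hw0 : interForm l w (stdVec l 0) = 0) :
    ∃ i : Fin l, w = stdVec l i.succ := by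
  rw [interForm_comm, interForm_stdVec_left, if_pos rfl, one_mul] at hw0
  rw [interForm_eq_sub_sum, hw0] at hww hwk
  simp only [canonClass, Fin.succ_ne_zero, if_false, mul_one] at hwk
  obtain ⟨i, hi⟩ := exists_eq_single_of_sum_sq_eq_one (v := fun i : Fin l => w i.succ)
    (by simpa [sq] using hww) (by simpa using hwk)
  refine ⟨i, funext fun j => ?_⟩
  cases j using Fin.cases with
  | zero => simp [hw0, stdVec, Fin.succ_ne_zero]
  | succ j => simpa [stdVec, Pi.single_apply] using congrFun hi j

lemma exists_permKIso_eq_of_apply_stdVec_zero (φ : kIsoGroup l)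
    (h0 : (φ : (Fin (l + 1) → ℤ) ≃ₗ[ℤ] (Fin (l + 1) → ℤ)) (stdVec l 0) = stdVec l 0) :
    ∃ σ, permKIso l σ = φ := by
  obtain ⟨φ, hB, hk⟩ := φ
  simp only at h0
  have himg (j : Fin l) : ∃ m : Fin l, φ (stdVec l j.succ) = stdVec l m.succ := by
    apply exists_eq_stdVec_succ
    · rw [hB, interForm_stdVec_left]
      simp [stdVec, Fin.succ_ne_zero]
    · rw [← hk, hB, interForm_stdVec_left]
      simp [canonClass, Fin.succ_ne_zero]
    · rw [← h0, hB, interForm_stdVec_left]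
      simp [stdVec, Fin.succ_ne_zero]
  choose u hu using himg
  have hu_inj : Function.Injective u := fun i j hij =>
    Fin.succ_injective _ <| stdVec_injective <| φ.injective <| by rw [hu, hu, hij]
  refine ⟨Equiv.ofBijective u (Finite.injective_iff_bijective.1 hu_inj),
    Subtype.ext <| (Pi.basisFun ℤ (Fin (l + 1))).ext' fun i => ?_⟩
  rw [Pi.basisFun_apply]
  change (permKIso l _ : (Fin (l + 1) → ℤ) ≃ₗ[ℤ] (Fin (l + 1) → ℤ)) (stdVec l i) = φ (stdVec l i)
  rw [permKIso_apply_stdVec]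
  cases i using Fin.cases with
  | zero => rw [succPerm_apply_zero, h0]
  | succ j => rw [succPerm_apply_succ, hu, Equiv.ofBijective_apply]

end AnyRank

lemma interForm_three (x y : Fin 4 → ℤ) :
    interForm 3 x y = x 0 * y 0 - x 1 * y 1 - x 2 * y 2 - x 3 * y 3 := by
  simp [interForm, Fin.sum_univ_four]
  ring

lemma eq_vec_four (x : Fin 4 → ℤ) : x = ![x 0, x 1, x 2, x 3] := by
  ext i
  fin_cases i <;> rfl

def rootFinset : Finset (Fin 4 → ℤ) :=
  {![0, 1, -1, 0], ![0, -1, 1, 0], ![0, 1, 0, -1], ![0, -1, 0, 1], ![0, 0, 1, -1], ![0, 0, -1, 1],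
    ![1, -1, -1, -1], ![-1, 1, 1, 1]}

lemma vec_mem_rootFinset {a b c d : ℤ} (hq : a * a - b * b - c * c - d * d = -2)
    (hk : 3 * a + b + c + d = 0) : ![a, b, c, d] ∈ rootFinset := by
  have hsum : b + c + d = -3 * a := by omega
  have ha : a * a ≤ 1 := by
    nlinarith [sq_nonneg (b - c), sq_nonneg (b - d), sq_nonneg (c - d), congrArg (· ^ 2) hsum]
  obtain ⟨ha₁, ha₂⟩ := Int.mem_Icc_of_mul_self_le_three (by omega : a * a ≤ 3)
  obtain ⟨hb₁, hb₂⟩ := Int.mem_Icc_of_mul_self_le_three (by nlinarith : b * b ≤ 3)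
  obtain ⟨hc₁, hc₂⟩ := Int.mem_Icc_of_mul_self_le_three (by nlinarith : c * c ≤ 3)
  obtain ⟨hd₁, hd₂⟩ := Int.mem_Icc_of_mul_self_le_three (by nlinarith : d * d ≤ 3)
  interval_cases a <;> interval_cases b <;> interval_cases c <;> interval_cases d <;>
    first | omega | decide

lemma rootSet_three : rootSet 3 = ↑rootFinset := by
  ext x
  refine ⟨fun ⟨hxx, hxk⟩ => ?_, fun hx => ?_⟩
  · rw [interForm_three] at hxx hxk
    simp only [canonClass] at hxk
    rw [eq_vec_four x]
    exact vec_mem_rootFinset (by linarith) (by simp at hxk; linarith)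
  · rw [Finset.mem_coe] at hx
    fin_cases hx <;> exact ⟨by decide, by decide⟩

/-- The reflection in this root is the quadratic Cremona transformation. -/
def cremonaRoot : Fin 4 → ℤ := stdVec 3 0 - stdVec 3 1 - stdVec 3 2 - stdVec 3 3

lemma setOf_roots_eq_rootFinset :
    {x : Fin 4 → ℤ |
        (∃ i j : Fin 4, 0 < i ∧ i < j ∧
          (x = stdVec 3 i - stdVec 3 j ∨ x = -(stdVec 3 i - stdVec 3 j))) ∨
        x = cremonaRoot ∨ x = -cremonaRoot} = ↑rootFinset := by
  ext x
  simp only [Set.mem_ofPred_eq, Finset.mem_coe]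
  constructor
  · rintro (⟨i, j, hi, hij, rfl | rfl⟩ | rfl | rfl)
    · revert i j
      decide
    · revert i j
      decide
    · decide
    · decide
  · intro hx
    fin_cases hx <;> decide

lemma cremonaRoot_mem_rootSet : cremonaRoot ∈ rootSet 3 := ⟨by decide, by decide⟩

def cremona : kIsoGroup 3 := reflKIso cremonaRoot_mem_rootSet

lemma cremona_mul_self : cremona * cremona = 1 := reflKIso_mul_self _

lemma cremona_apply_stdVec_zero :
    (cremona : (Fin 4 → ℤ) ≃ₗ[ℤ] (Fin 4 → ℤ)) (stdVec 3 0) = ![2, -1, -1, -1] := by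
  change rootReflection cremonaRoot_mem_rootSet.1 _ = _
  rw [rootReflection_apply]
  decide

lemma commute_cremona_permKIso (σ : Equiv.Perm (Fin 3)) : Commute cremona (permKIso 3 σ) := by
  refine (Subtype.ext (commute_rootReflection cremonaRoot_mem_rootSet.1 (permKIso 3 σ).2 ?_) :
    Commute (permKIso 3 σ) cremona).symm
  rw [(by decide : cremonaRoot = fun i => if i = 0 then 1 else -1)]
  exact coordPerm_apply_ite (succPerm_apply_zero σ) 1 (-1)

lemma vec_eq_or_of_quadratic_eq_one {a b c d : ℤ} (hq : a * a - b * b - c * c - d * d = 1)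
    (hk : 3 * a + b + c + d = 3) :
    ![a, b, c, d] = ![1, 0, 0, 0] ∨ ![a, b, c, d] = ![2, -1, -1, -1] := by
  have hsum : b + c + d = 3 - 3 * a := by omega
  have ha : (a - 1) * (a - 2) ≤ 0 := by
    nlinarith [sq_nonneg (b - c), sq_nonneg (b - d), sq_nonneg (c - d), congrArg (· ^ 2) hsum]
  have ha₁ : 1 ≤ a := by nlinarith
  have ha₂ : a ≤ 2 := by nlinarith
  obtain ⟨hb₁, hb₂⟩ := Int.mem_Icc_of_mul_self_le_three (by nlinarith : b * b ≤ 3)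
  obtain ⟨hc₁, hc₂⟩ := Int.mem_Icc_of_mul_self_le_three (by nlinarith : c * c ≤ 3)
  obtain ⟨hd₁, hd₂⟩ := Int.mem_Icc_of_mul_self_le_three (by nlinarith : d * d ≤ 3)
  interval_cases a <;> interval_cases b <;> interval_cases c <;> interval_cases d <;>
    first | omega | decide

lemma apply_stdVec_zero_eq_or (φ : kIsoGroup 3) :
    (φ : (Fin 4 → ℤ) ≃ₗ[ℤ] (Fin 4 → ℤ)) (stdVec 3 0) = stdVec 3 0 ∨
      (φ : (Fin 4 → ℤ) ≃ₗ[ℤ] (Fin 4 → ℤ)) (stdVec 3 0) = ![2, -1, -1, -1] := by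
  obtain ⟨φ, hB, hk⟩ := φ
  have hq : interForm 3 (φ (stdVec 3 0)) (φ (stdVec 3 0)) = 1 := by rw [hB]; decide
  have hk' : interForm 3 (φ (stdVec 3 0)) (canonClass 3) = -3 := by rw [← hk, hB]; decide
  rw [interForm_three] at hq hk'
  simp only [canonClass] at hk'
  have hv := vec_eq_or_of_quadratic_eq_one hq (by simp at hk'; linarith)
  rwa [← eq_vec_four, (by decide : ![(1 : ℤ), 0, 0, 0] = stdVec 3 0)] at hv

def kIsoHom : Multiplicative (ZMod 2) × Equiv.Perm (Fin 3) →* kIsoGroup 3 :=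
  MonoidHom.noncommCoprod (zmodTwoHom cremona_mul_self) (permKIso 3)
    fun _ σ => (commute_cremona_permKIso σ).pow_left _

lemma kIsoHom_apply (a : Multiplicative (ZMod 2)) (σ : Equiv.Perm (Fin 3)) :
    kIsoHom (a, σ) = cremona ^ (Multiplicative.toAdd a).val * permKIso 3 σ := rfl

lemma kIsoHom_injective : Function.Injective kIsoHom := by
  refine (injective_iff_map_eq_one _).2 fun ⟨a, σ⟩ h => ?_
  rw [kIsoHom_apply] at h
  obtain rfl : a = 1 := by
    refine (Multiplicative.zmod_two_eq_one_or a).resolve_right fun ha => ?_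
    have h0 := congrArg
      (fun φ : kIsoGroup 3 => (φ : (Fin 4 → ℤ) ≃ₗ[ℤ] (Fin 4 → ℤ)) (stdVec 3 0)) h
    simp only [ha, toAdd_ofAdd, ZMod.val_one, pow_one, Subgroup.coe_mul, LinearEquiv.mul_apply,
      permKIso_apply_stdVec, succPerm_apply_zero, cremona_apply_stdVec_zero,
      OneMemClass.coe_one, LinearEquiv.coe_one, id] at h0
    exact absurd h0 (by decide)
  rw [toAdd_one, ZMod.val_zero, pow_zero, one_mul] at h
  rw [permKIso_injective (h.trans (map_one _).symm)]
  rfl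

lemma kIsoHom_surjective : Function.Surjective kIsoHom := by
  intro φ
  rcases apply_stdVec_zero_eq_or φ with h0 | h0
  · obtain ⟨σ, rfl⟩ := exists_permKIso_eq_of_apply_stdVec_zero φ h0
    exact ⟨(1, σ), by rw [kIsoHom_apply, toAdd_one, ZMod.val_zero, pow_zero, one_mul]⟩
  · obtain ⟨σ, hσ⟩ := exists_permKIso_eq_of_apply_stdVec_zero (cremona * φ) <| by
      rw [Subgroup.coe_mul, LinearEquiv.mul_apply, h0, ← cremona_apply_stdVec_zero,
        ← LinearEquiv.mul_apply, ← Subgroup.coe_mul, cremona_mul_self]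
      rfl
    refine ⟨(.ofAdd 1, σ), ?_⟩
    rw [kIsoHom_apply, hσ, toAdd_ofAdd, ZMod.val_one, pow_one, ← mul_assoc, cremona_mul_self,
      one_mul]

/-- For `l = 3`: the root set is exactly
`{±(e_i - e_j) : 1 ≤ i < j ≤ 3} ∪ {±(e₀ - e₁ - e₂ - e₃)}`, it has exactly `8`
elements, and the group of `K`-isometries of `L₃` has order `12`, being isomorphic
to the product of a cyclic group of order `2` and the symmetric group on `3` letters. -/
theorem kIsometries_rank_three :
    ({x : Fin 4 → ℤ | interForm 3 x x = -2 ∧ interForm 3 x (canonClass 3) = 0} =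
      {x : Fin 4 → ℤ |
        (∃ i j : Fin 4, 0 < i ∧ i < j ∧
          (x = stdVec 3 i - stdVec 3 j ∨ x = -(stdVec 3 i - stdVec 3 j))) ∨
        x = stdVec 3 0 - stdVec 3 1 - stdVec 3 2 - stdVec 3 3 ∨
        x = -(stdVec 3 0 - stdVec 3 1 - stdVec 3 2 - stdVec 3 3)}) ∧
    Set.ncard {x : Fin 4 → ℤ | interForm 3 x x = -2 ∧ interForm 3 x (canonClass 3) = 0} = 8 ∧
    Nat.card (kIsoGroup 3) = 12 ∧
    Nonempty (kIsoGroup 3 ≃* Multiplicative (ZMod 2) × Equiv.Perm (Fin 3)) := by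
  let e := MulEquiv.ofBijective kIsoHom ⟨kIsoHom_injective, kIsoHom_surjective⟩
  refine ⟨rootSet_three.trans setOf_roots_eq_rootFinset.symm, ?_, ?_, ⟨e.symm⟩⟩
  · change (rootSet 3).ncard = 8
    rw [rootSet_three, Set.ncard_coe_finset]
    decide
  · rw [← Nat.card_congr e.toEquiv, Nat.card_prod]
    simp [Fintype.card_perm, Nat.factorial]
end

section
/- For every l with 2 ≤ l ≤ 8, the group of K-isometries of L_l is finite. -/
theorem Set.Finite.of_forall_map_basis_mem {ι R M N : Type*} [Semiring R] [AddCommMonoid M]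
    [Module R M] [AddCommMonoid N] [Module R N] [Finite ι] (b : Module.Basis ι R M)
    {S : Set (M ≃ₗ[R] N)} {T : Set N} (hT : T.Finite) (hS : ∀ φ ∈ S, ∀ i, φ (b i) ∈ T) :
    S.Finite := by
  refine Set.Finite.of_finite_image (f := fun φ i => φ (b i)) ?_ fun φ _ ψ _ h =>
    b.ext' fun i => congrFun h i
  refine (Set.Finite.pi' fun _ => hT).subset ?_
  rintro _ ⟨φ, hφ, rfl⟩ i
  exact hS φ hφ i

namespace interForm

variable {l : ℕ}

theorem eq_sub_sum (x y : Fin (l + 1) → ℤ) :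
    interForm l x y = x 0 * y 0 - ∑ i : Fin l, x i.succ * y i.succ := by
  simp [interForm, Fin.sum_univ_succ, Fin.succ_ne_zero, sub_eq_add_neg]

theorem canonClass_right (x : Fin (l + 1) → ℤ) :
    interForm l x (canonClass l) = -3 * x 0 - ∑ i : Fin l, x i.succ := by
  simp [eq_sub_sum, canonClass, Fin.succ_ne_zero, mul_comm]

theorem single_left (j : Fin (l + 1)) (y : Fin (l + 1) → ℤ) :
    interForm l (Pi.single j 1) y = (if j = 0 then 1 else -1) * y j := by
  rw [interForm, Finset.sum_eq_single j (fun i _ hi => by simp [hi]) (by simp)]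
  simp

end interForm

theorem abs_apply_le_of_interForm_bounds {l : ℕ} (hl : l ≤ 8) {v : Fin (l + 1) → ℤ}
    (hvv : -1 ≤ interForm l v v) (hvk : |interForm l v (canonClass l)| ≤ 3) :
    ∀ i, |v i| ≤ 19 := by
  rw [interForm.eq_sub_sum] at hvv
  rw [interForm.canonClass_right] at hvk
  set a := v 0
  set s := ∑ i : Fin l, v i.succ
  set q := ∑ i : Fin l, v i.succ * v i.succ
  set t := s + 3 * a
  have hq : q = ∑ i : Fin l, v i.succ ^ 2 := by simp only [q, sq]
  have hs : s ^ 2 ≤ 8 * (a ^ 2 + 1) := by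
    have cauchySchwarz : s ^ 2 ≤ l * q := by
      simpa [hq] using sq_sum_le_card_mul_sum_sq (s := Finset.univ) (f := fun i : Fin l => v i.succ)
    have : (l : ℤ) * q ≤ 8 * q :=
      mul_le_mul_of_nonneg_right (by exact_mod_cast hl) (hq ▸ by positivity)
    nlinarith
  have ht : |t| ≤ 3 := by rwa [show -3 * a - s = -t by ring, abs_neg] at hvk
  -- `s = t - 3a`, so `hs` reads `a² - 6at + t² ≤ 8`, i.e. `(a - 3t)² ≤ 8 + 8t²`.
  have hdev : |a - 3 * t| ≤ 9 :=
    abs_le_of_sq_le_sq (by nlinarith [abs_le.mp ht]) (by norm_num)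
  have ha : |a| ≤ 18 := by
    rw [abs_le] at *
    constructor <;> linarith
  have ha2 : a ^ 2 ≤ 18 ^ 2 := sq_le_sq' (abs_le.mp ha).1 (abs_le.mp ha).2
  intro i
  refine abs_le_of_sq_le_sq ?_ (by norm_num)
  cases i using Fin.cases with
  | zero => linarith
  | succ j =>
    have hj : v j.succ ^ 2 ≤ q :=
      hq ▸ Finset.single_le_sum (f := fun i : Fin l => v i.succ ^ 2)
        (fun i _ => sq_nonneg _) (Finset.mem_univ j)
    linarith

theorem kIsometries_finite_general (l : ℕ) (h8 : l ≤ 8) :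
    Set.Finite
      {φ : (Fin (l + 1) → ℤ) ≃ₗ[ℤ] (Fin (l + 1) → ℤ) |
        (∀ x y, interForm l (φ x) (φ y) = interForm l x y) ∧
          φ (canonClass l) = canonClass l} := by
  refine Set.Finite.of_forall_map_basis_mem (Pi.basisFun ℤ (Fin (l + 1)))
    (Set.finite_Icc (-19) 19) ?_
  rintro φ ⟨hB, hk⟩ j
  rw [Pi.basisFun_apply]
  have hvv : -1 ≤ interForm l (φ (Pi.single j 1)) (φ (Pi.single j 1)) := by
    rw [hB, interForm.single_left]
    split_ifs <;> norm_num
  have hvk : |interForm l (φ (Pi.single j 1)) (canonClass l)| ≤ 3 := by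
    rw [← hk, hB, interForm.single_left, canonClass]
    split_ifs <;> norm_num
  have hv := abs_apply_le_of_interForm_bounds h8 hvv hvk
  exact ⟨fun i => (abs_le.mp (hv i)).1, fun i => (abs_le.mp (hv i)).2⟩

/-- For every `l` with `2 ≤ l ≤ 8`, the group of `K`-isometries of `L_l`
(ℤ-linear automorphisms preserving `B` and fixing `k`) is finite. -/
theorem kIsometries_finite (l : ℕ) (h2 : 2 ≤ l) (h8 : l ≤ 8) :
    Set.Finite
      {φ : (Fin (l + 1) → ℤ) ≃ₗ[ℤ] (Fin (l + 1) → ℤ) |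
        (∀ x y, interForm l (φ x) (φ y) = interForm l x y) ∧
          φ (canonClass l) = canonClass l} :=
  kIsometries_finite_general l h8
end

section
/- Let (A₁, …, Aₙ) be a toric system in (L, B, k). Let L' = L ⊕ ℤ with R = (0,1), let B' be the symmetric bilinear form on L' extending B with B'(x, R) = 0 for all x ∈ L and B'(R,R) = −1, and let k' = k + R. Then for every index i (taken modulo n) the sequence (A₁, …, A_{i−1}, A_i − R, R, A_{i+1} − R, A_{i+2}, …, Aₙ) of length n+1 is a toric system in (L', B', k'); moreover its sequence of self-intersection numbers is (B(A₁,A₁), …, B(A_{i−1},A_{i−1}), B(A_i,A_i) − 1, −1, B(A_{i+1},A_{i+1}) − 1, B(A_{i+2},A_{i+2}), …, B(Aₙ,Aₙ)). -/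
/-- A toric system of length `m ≥ 3` in `(L, β, k)`: a cyclic sequence
`A : Fin m → L` (indices taken modulo `m`) with `β(A_i, A_{i+1}) = 1`,
`β(A_i, A_j) = 0` for cyclically non-adjacent distinct `i, j`, and `∑ A_i = -k`. -/
def IsToricSystem {L : Type*} [AddCommGroup L] (β : L → L → ℤ) (k : L)
    {m : ℕ} [NeZero m] (A : Fin m → L) : Prop :=
  3 ≤ m ∧ (∀ i, β (A i) (A (i + 1)) = 1) ∧
    (∀ i j : Fin m, i ≠ j → j ≠ i + 1 → i ≠ j + 1 → β (A i) (A j) = 0) ∧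
    ∑ i, A i = -k

/-- Insert a new entry into a cyclic sequence `s` of length `m` right after
position `i`: position `i` gets the value `u`, the new position `i + 1` gets
the value `v`, the (cyclic) successor position of the new entry gets the value
`w`, and all other entries are kept. -/
def insertAt {α : Type*} {m : ℕ} (s : Fin m → α) (i : Fin m) (u v w : α) :
    Fin (m + 1) → α := fun j =>
  if (j : ℕ) = (i : ℕ) then u
  else if (j : ℕ) = (i : ℕ) + 1 then v
  else if (j : ℕ) = ((i : ℕ) + 2) % (m + 1) then w
  else if h : (j : ℕ) < (i : ℕ) then s ⟨j, Nat.lt_trans h i.isLt⟩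
  else s ⟨(j : ℕ) - 1, by omega⟩

theorem succMod (a n : ℕ) (h : a ≤ n) : a % n = if a = n then 0 else a := by
  by_cases h' : a = n
  · rw [if_pos h', h']; exact Nat.mod_self n
  · rw [if_neg h']; exact Nat.mod_eq_of_lt (by omega)

set_option maxHeartbeats 2000000 in
/-- Augmentation of a toric system. Let `(A₁, …, Aₙ)` be a toric system in
`(L, B, k)` with `B` a symmetric ℤ-bilinear form. Let `L' = L ⊕ ℤ`, `R = (0,1)`,
let `B'` be the symmetric bilinear form extending `B` with `B'(L, R) = 0` and
`B'(R, R) = -1`, and let `k' = k + R`. Then for every index `i` (modulo `n`) the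
sequence `(A₁, …, A_{i-1}, A_i - R, R, A_{i+1} - R, A_{i+2}, …, Aₙ)` is a toric
system in `(L', B', k')`, and its self-intersection sequence is
`(B(A₁,A₁), …, B(A_i,A_i) - 1, -1, B(A_{i+1},A_{i+1}) - 1, …, B(Aₙ,Aₙ))`. -/
theorem augmentation_isToricSystem {L : Type*} [AddCommGroup L] [Module ℤ L]
    [Module.Free ℤ L] [Module.Finite ℤ L]
    (B : L → L → ℤ)
    (haddl : ∀ x y z, B (x + y) z = B x z + B y z)
    (haddr : ∀ x y z, B x (y + z) = B x y + B x z)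
    (hsymm : ∀ x y, B x y = B y x)
    (k : L) {m : ℕ} [NeZero m] (A : Fin m → L)
    (hA : IsToricSystem B k A) (i : Fin m) :
    letI B' : L × ℤ → L × ℤ → ℤ := fun x y => B x.1 y.1 - x.2 * y.2
    letI R : L × ℤ := (0, 1)
    letI k' : L × ℤ := ((k, 0) : L × ℤ) + R
    letI A' : Fin (m + 1) → L × ℤ :=
      insertAt (fun j => ((A j, 0) : L × ℤ)) i ((A i, 0) - R) R ((A (i + 1), 0) - R)
    IsToricSystem B' k' A' ∧
      (fun j => B' (A' j) (A' j)) =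
        insertAt (fun j => B (A j) (A j)) i (B (A i) (A i) - 1) (-1)
          (B (A (i + 1)) (A (i + 1)) - 1) := by
  obtain ⟨hm3, hadjA, hortA, hsumA⟩ := hA
  have hi : (i : ℕ) < m := i.isLt
  have hB0r : ∀ x, B x 0 = 0 := by
    intro x; have h := haddr x 0 0; rw [add_zero] at h; omega
  have hB0l : ∀ x, B 0 x = 0 := by intro x; rw [hsymm]; exact hB0r x
  have hone : ((1 : Fin m) : ℕ) = 1 := by
    rw [Fin.val_one']; exact Nat.mod_eq_of_lt (by omega)
  have hone' : ((1 : Fin (m + 1)) : ℕ) = 1 := by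
    rw [Fin.val_one']; exact Nat.mod_eq_of_lt (by omega)
  have hvadd : ∀ p : Fin m, ((p + 1 : Fin m) : ℕ) =
      if (p : ℕ) + 1 = m then 0 else (p : ℕ) + 1 := fun p => by
    rw [Fin.val_add, hone, succMod _ _ p.isLt]
  have hvadd' : ∀ p : Fin (m + 1), ((p + 1 : Fin (m + 1)) : ℕ) =
      if (p : ℕ) + 1 = m + 1 then 0 else (p : ℕ) + 1 := fun p => by
    rw [Fin.val_add, hone', succMod _ _ (by omega)]
  have hadj1 : ∀ p q : Fin m,
      ((q : ℕ) = (p : ℕ) + 1 ∨ ((p : ℕ) + 1 = m ∧ (q : ℕ) = 0)) →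
      B (A p) (A q) = 1 := by
    intro p q hq
    have h : q = p + 1 := Fin.ext (by rw [hvadd]; split <;> omega)
    rw [h]; exact hadjA p
  have hort1 : ∀ p q : Fin m, (p : ℕ) ≠ (q : ℕ) →
      ¬((q : ℕ) = (p : ℕ) + 1 ∨ ((p : ℕ) + 1 = m ∧ (q : ℕ) = 0)) →
      ¬((p : ℕ) = (q : ℕ) + 1 ∨ ((q : ℕ) + 1 = m ∧ (p : ℕ) = 0)) →
      B (A p) (A q) = 0 := by
    intro p q h1 h2 h3
    refine hortA p q (fun h => h1 (by rw [h])) (fun h => h2 ?_) (fun h => h3 ?_)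
    · rw [h, hvadd]; split <;> omega
    · rw [h, hvadd]; split <;> omega
  obtain ⟨c2, hc2, hc2'⟩ : ∃ c, ((i : ℕ) + 2) % (m + 1) = c ∧
      ((i : ℕ) + 1 = m ∧ c = 0 ∨ (i : ℕ) + 1 < m ∧ c = (i : ℕ) + 2) := by
    by_cases h : (i : ℕ) + 1 = m
    · exact ⟨0, by rw [succMod _ _ (by omega), if_pos (by omega)], Or.inl ⟨h, rfl⟩⟩
    · exact ⟨(i : ℕ) + 2, by rw [succMod _ _ (by omega), if_neg (by omega)],
        Or.inr ⟨by omega, rfl⟩⟩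
  obtain ⟨c1, hc1, hc1'⟩ : ∃ c, ((i + 1 : Fin m) : ℕ) = c ∧
      ((i : ℕ) + 1 = m ∧ c = 0 ∨ (i : ℕ) + 1 < m ∧ c = (i : ℕ) + 1) := by
    rw [hvadd]
    by_cases h : (i : ℕ) + 1 = m
    · exact ⟨0, if_pos h, Or.inl ⟨h, rfl⟩⟩
    · exact ⟨(i : ℕ) + 1, if_neg h, Or.inr ⟨by omega, rfl⟩⟩
  simp only [IsToricSystem]
  refine ⟨⟨by omega, ?_, ?_, ?_⟩, ?_⟩
  · -- adjacency
    intro j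
    have hj : (j : ℕ) < m + 1 := j.isLt
    obtain ⟨b, hb, hb'⟩ : ∃ b, ((j + 1 : Fin (m + 1)) : ℕ) = b ∧
        ((j : ℕ) + 1 = m + 1 ∧ b = 0 ∨ (j : ℕ) + 1 < m + 1 ∧ b = (j : ℕ) + 1) := by
      rw [hvadd']
      by_cases h : (j : ℕ) + 1 = m + 1
      · exact ⟨0, if_pos h, Or.inl ⟨h, rfl⟩⟩
      · exact ⟨(j : ℕ) + 1, if_neg h, Or.inr ⟨by omega, rfl⟩⟩
    clear hortA hsumA haddl haddr hort1 hone hone' hvadd hvadd' hadjA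
    simp only [insertAt, hb, hc2]
    split_ifs <;>
      first
        | omega
        | simp only [Prod.mk_sub_mk, sub_zero, zero_sub, mul_one, one_mul,
            mul_zero, zero_mul, mul_neg, neg_neg, sub_neg_eq_add, zero_add,
            add_zero, neg_mul, hB0r, hB0l] <;>
          first
            | omega
            | exact hadj1 _ _ (by try simp only [Fin.val_mk, hc1]; omega)
            | (rw [hsymm]; exact hadj1 _ _ (by try simp only [Fin.val_mk, hc1]; omega))
  · -- orthogonality
    intro a b hab hb1 ha1
    have haL : (a : ℕ) < m + 1 := a.isLt
    have hbL : (b : ℕ) < m + 1 := b.isLt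
    have hab' : (a : ℕ) ≠ (b : ℕ) := fun h => hab (Fin.ext h)
    have hb1' : ¬((b : ℕ) = (a : ℕ) + 1 ∨ ((a : ℕ) + 1 = m + 1 ∧ (b : ℕ) = 0)) := by
      intro h; exact hb1 (Fin.ext (by rw [hvadd']; split <;> omega))
    have ha1' : ¬((a : ℕ) = (b : ℕ) + 1 ∨ ((b : ℕ) + 1 = m + 1 ∧ (a : ℕ) = 0)) := by
      intro h; exact ha1 (Fin.ext (by rw [hvadd']; split <;> omega))
    clear hortA hsumA haddl haddr hone hone' hvadd hvadd' hadjA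
    simp only [insertAt, hc2]
    split_ifs <;>
      first
        | omega
        | simp only [Prod.mk_sub_mk, sub_zero, zero_sub, mul_one, one_mul,
            mul_zero, zero_mul, mul_neg, neg_neg, sub_neg_eq_add, zero_add,
            add_zero, neg_mul, hB0r, hB0l] <;>
          first
            | omega
            | exact hort1 _ _ (by try simp only [Fin.val_mk, hc1]; omega) (by try simp only [Fin.val_mk, hc1]; omega) (by try simp only [Fin.val_mk, hc1]; omega)
            | (rw [hadj1 i (i + 1) (by try simp only [Fin.val_mk, hc1]; omega)]; norm_num)
            | (rw [hsymm, hadj1 i (i + 1) (by try simp only [Fin.val_mk, hc1]; omega)]; norm_num)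
  · -- sum
    have hc1v : ((i + 1 : Fin m) : ℕ) = c1 := hc1
    have hii1 : i ≠ i + 1 := by
      intro h
      have hv := congrArg Fin.val h
      rw [hc1v] at hv; omega
    have hp : (i : ℕ) + 1 < m + 1 := by omega
    rw [Fin.sum_univ_succAbove _ (⟨(i : ℕ) + 1, hp⟩ : Fin (m + 1))]
    have hsa : ∀ t : Fin m,
        (((⟨(i : ℕ) + 1, hp⟩ : Fin (m + 1)).succAbove t : Fin (m + 1)) : ℕ) =
          if (t : ℕ) < (i : ℕ) + 1 then (t : ℕ) else (t : ℕ) + 1 := by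
      intro t
      rw [Fin.succAbove]
      rcases lt_or_ge ((t : ℕ)) ((i : ℕ) + 1) with h | h
      · have hlt : Fin.castSucc t < (⟨(i : ℕ) + 1, hp⟩ : Fin (m + 1)) := by
          simp only [Fin.lt_def, Fin.coe_castSucc]; exact h
        rw [if_pos hlt, if_pos h, Fin.coe_castSucc]
      · have hlt : ¬ Fin.castSucc t < (⟨(i : ℕ) + 1, hp⟩ : Fin (m + 1)) := by
          simp only [Fin.lt_def, Fin.coe_castSucc]; omega
        rw [if_neg hlt, if_neg (by omega), Fin.val_succ]
    have hA'p : insertAt (fun j => ((A j, 0) : L × ℤ)) i ((A i, 0) - (0, 1)) (0, 1)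
        ((A (i + 1), 0) - (0, 1)) ⟨(i : ℕ) + 1, hp⟩ = (0, 1) := by
      simp only [insertAt]
      rw [if_neg (by omega)]; simp
    have key : ∀ t : Fin m, insertAt (fun j => ((A j, 0) : L × ℤ)) i
        ((A i, 0) - (0, 1)) (0, 1) ((A (i + 1), 0) - (0, 1))
          ((⟨(i : ℕ) + 1, hp⟩ : Fin (m + 1)).succAbove t) =
        ((A t, 0) : L × ℤ) - (if t = i then ((0, 1) : L × ℤ) else 0) -
          (if t = i + 1 then ((0, 1) : L × ℤ) else 0) := by
      intro t
      have htv : (t : ℕ) < m := t.isLt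
      obtain ⟨sv, hsv, hsv'⟩ : ∃ s,
          (((⟨(i : ℕ) + 1, hp⟩ : Fin (m + 1)).succAbove t : Fin (m + 1)) : ℕ) = s ∧
            ((t : ℕ) < (i : ℕ) + 1 ∧ s = (t : ℕ) ∨
              ¬((t : ℕ) < (i : ℕ) + 1) ∧ s = (t : ℕ) + 1) := by
        rw [hsa t]
        by_cases h : (t : ℕ) < (i : ℕ) + 1
        · exact ⟨_, if_pos h, Or.inl ⟨h, rfl⟩⟩
        · exact ⟨_, if_neg h, Or.inr ⟨h, rfl⟩⟩
      simp only [insertAt, hc2, hsv]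
      by_cases h1 : t = i
      · subst h1
        rw [if_pos (by omega), if_pos rfl, if_neg (by intro h; exact hii1 h)]
        simp
      · have h1v : (t : ℕ) ≠ (i : ℕ) := fun h => h1 (Fin.ext h)
        by_cases h2 : t = i + 1
        · have h2v : (t : ℕ) = c1 := by rw [h2, hc1v]
          rw [if_neg (by omega), if_neg (by omega), if_pos (by omega),
            if_neg h1, if_pos h2, h2]
          simp
        · have h2v : (t : ℕ) ≠ c1 := fun h => h2 (Fin.ext (by rw [hc1v]; exact h))
          rw [if_neg (by omega), if_neg (by omega), if_neg (by omega),
            if_neg h1, if_neg h2]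
          by_cases hlt : sv < (i : ℕ)
          · rw [dif_pos hlt, sub_zero, sub_zero]
            exact congrArg (fun x => ((A x, 0) : L × ℤ))
              (Fin.ext (by simp only [Fin.val_mk]; omega))
          · rw [dif_neg hlt, sub_zero, sub_zero]
            exact congrArg (fun x => ((A x, 0) : L × ℤ))
              (Fin.ext (by simp only [Fin.val_mk]; omega))
    rw [hA'p, Finset.sum_congr rfl (fun t _ => key t),
      Finset.sum_sub_distrib, Finset.sum_sub_distrib,
      Finset.sum_ite_eq' Finset.univ i (fun _ => ((0, 1) : L × ℤ)),
      Finset.sum_ite_eq' Finset.univ (i + 1) (fun _ => ((0, 1) : L × ℤ)),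
      if_pos (Finset.mem_univ i), if_pos (Finset.mem_univ (i + 1))]
    apply Prod.ext <;> simp [Prod.fst_sum, Prod.snd_sum, hsumA]
  · -- self-intersections
    funext j
    simp only [insertAt, hc2]
    split_ifs <;>
      simp only [Prod.mk_sub_mk, sub_zero, zero_sub, mul_one, one_mul, mul_zero,
        zero_mul, mul_neg, neg_neg, sub_neg_eq_add, zero_add, add_zero, neg_mul,
        hB0r, hB0l] <;>
      norm_num
end

section
/- Every toric system of length 4 in (L, B, k) coincides, up to a cyclic rotation of the indices and/or reversal of the order of the indices, with A_{r,i} = (P, iP + Q, P, −(r+i)P + Q) for some i ∈ ℤ, or, in case r is even, possibly with Ã_{r,i} = (Q − (r/2)P, P + i(Q − (r/2)P), Q − (r/2)P, P − i(Q − (r/2)P)) for some i ∈ ℤ. Conversely, every sequence A_{r,i} (any r) and every Ã_{r,i} (r even) is a toric system of length 4 in (L, B, k). -/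
/- The Picard lattice of the Hirzebruch surface `F_r`: `L = ℤP ⊕ ℤQ`, modelled as
`ℤ × ℤ` where `(a, b)` stands for `aP + bQ`, with `B(P,P) = 0`, `B(P,Q) = 1`,
`B(Q,Q) = r`, and `-k = (2-r)P + 2Q`. -/

/-- The intersection form on `Pic(F_r) = ℤP ⊕ ℤQ`. -/
def hirzForm (r : ℕ) (x y : ℤ × ℤ) : ℤ :=
  x.1 * y.2 + x.2 * y.1 + r * x.2 * y.2

/-- The canonical class of `F_r`: `-k = (2-r)P + 2Q`. -/
def hirzCanon (r : ℕ) : ℤ × ℤ := (-(2 - (r : ℤ)), -2)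

/-- A toric system of length 4 on `F_r`. -/
def IsToricSystemFour (r : ℕ) (A₁ A₂ A₃ A₄ : ℤ × ℤ) : Prop :=
  hirzForm r A₁ A₂ = 1 ∧ hirzForm r A₂ A₃ = 1 ∧ hirzForm r A₃ A₄ = 1 ∧
    hirzForm r A₄ A₁ = 1 ∧ hirzForm r A₁ A₃ = 0 ∧ hirzForm r A₂ A₄ = 0 ∧
    A₁ + A₂ + A₃ + A₄ = -(hirzCanon r)

/-- Two quadruples coincide up to cyclic rotation and/or reversal of the order
of the indices. -/
def DihedralEq (A₁ A₂ A₃ A₄ B₁ B₂ B₃ B₄ : ℤ × ℤ) : Prop :=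
  (A₁, A₂, A₃, A₄) = (B₁, B₂, B₃, B₄) ∨ (A₁, A₂, A₃, A₄) = (B₂, B₃, B₄, B₁) ∨
  (A₁, A₂, A₃, A₄) = (B₃, B₄, B₁, B₂) ∨ (A₁, A₂, A₃, A₄) = (B₄, B₁, B₂, B₃) ∨
  (A₁, A₂, A₃, A₄) = (B₄, B₃, B₂, B₁) ∨ (A₁, A₂, A₃, A₄) = (B₃, B₂, B₁, B₄) ∨
  (A₁, A₂, A₃, A₄) = (B₂, B₁, B₄, B₃) ∨ (A₁, A₂, A₃, A₄) = (B₁, B₄, B₃, B₂)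

/-- `A_{r,i} = (P, iP + Q, P, -(r+i)P + Q)` where `P = (1,0)`, `Q = (0,1)`. -/
def hirzSysA (r : ℕ) (i : ℤ) : (ℤ × ℤ) × (ℤ × ℤ) × (ℤ × ℤ) × (ℤ × ℤ) :=
  ((1, 0), (i, 1), (1, 0), (-((r : ℤ) + i), 1))

/-- `Ã_{r,i} = (Q - sP, P + i(Q - sP), Q - sP, P - i(Q - sP))` where `s = r/2`. -/
def hirzSysB (s : ℤ) (i : ℤ) : (ℤ × ℤ) × (ℤ × ℤ) × (ℤ × ℤ) × (ℤ × ℤ) :=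
  ((-s, 1), (1 - i * s, i), (-s, 1), (1 + i * s, -i))

lemma main13 (r : ℕ) (a b c d g h : ℤ)
    (h12 : a*d + b*c + (r:ℤ)*b*d = 1)
    (h34 : a*h + b*g + (r:ℤ)*b*h = 1)
    (h13 : a*b + b*a + (r:ℤ)*b*b = 0)
    (hs1 : a + c + a + g = 2 - (r:ℤ))
    (hs2 : b + d + b + h = 2) :
    (∃ i : ℤ, a = 1 ∧ b = 0 ∧ c = i ∧ d = 1 ∧ g = -((r:ℤ)+i) ∧ h = 1) ∨
    (∃ s i : ℤ, (r:ℤ) = 2*s ∧ a = -s ∧ b = 1 ∧ c = 1 - i*s ∧ d = i ∧ g = 1 + i*s ∧ h = -i) := by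
  rcases eq_or_ne b 0 with hb | hb
  · subst hb
    have had : a * d = 1 := by linear_combination h12
    have hah : a * h = 1 := by linear_combination h34
    have ha0 : a ≠ 0 := by rintro rfl; simp at had
    have hdh : d = h := by
      have : a * (d - h) = 0 := by ring_nf; linear_combination had - hah
      have := mul_eq_zero.mp this
      omega
    have hd1 : d = 1 := by omega
    have ha1 : a = 1 := by rw [hd1] at had; omega
    refine Or.inl ⟨c, ha1, rfl, rfl, hd1, by omega, by omega⟩
  · have h2a : 2*a + (r:ℤ)*b = 0 := by
      have : b * (2*a + (r:ℤ)*b) = 0 := by linear_combination h13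
      rcases mul_eq_zero.mp this with h | h
      · exact absurd h hb
      · exact h
    have key1 : b * (2*c + (r:ℤ)*d) = 2 := by linear_combination 2*h12 - d*h2a
    have key2 : b * (2*g + (r:ℤ)*h) = 2 := by linear_combination 2*h34 - h*h2a
    have hbdvd : b ∣ 2 := ⟨_, key1.symm⟩
    have hble : b = 1 ∨ b = -1 ∨ b = 2 ∨ b = -2 := by
      have h1 : b.natAbs ∣ 2 := by
        have := Int.natAbs_dvd_natAbs.mpr hbdvd
        simpa using this
      have h2 : b.natAbs ≤ 2 := Nat.le_of_dvd (by norm_num) h1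
      have h3 : b.natAbs ≠ 0 := Int.natAbs_ne_zero.mpr hb
      omega
    rcases hble with hb1 | hb1 | hb1 | hb1 <;> subst hb1
    · have hr : (r:ℤ) = 2 * (-a) := by omega
      have hhd : h = -d := by omega
      refine Or.inr ⟨-a, d, hr, by ring, rfl, ?_, rfl, ?_, hhd⟩
      · have : 2*c + (r:ℤ)*d = 2 := by linarith [key1]
        rw [hr] at this; linarith
      · have : 2*g + (r:ℤ)*h = 2 := by linarith [key2]
        rw [hr, hhd] at this; linarith
    · exfalso
      have hr : (r:ℤ) = 2 * a := by omega
      have k1 : 2*c + (r:ℤ)*d = -2 := by linarith [key1]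
      have k2 : 2*g + (r:ℤ)*h = -2 := by linarith [key2]
      have hdh : d + h = 4 := by omega
      have hcg : c + g = 2 - 2*(r:ℤ) := by omega
      have : 2*(c+g) + (r:ℤ)*(d+h) = -4 := by linear_combination k1 + k2
      rw [hdh, hcg] at this; linarith
    · exfalso
      have ha : a = -(r:ℤ) := by omega
      have k1 : 2*(2*c + (r:ℤ)*d) = 2 := by linear_combination key1
      have k2 : 2*(2*g + (r:ℤ)*h) = 2 := by linear_combination key2
      have hdh : d + h = -2 := by omega
      have hcg : c + g = 2 + (r:ℤ) := by omega
      have : 2*(2*(c+g) + (r:ℤ)*(d+h)) = 4 := by linear_combination k1 + k2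
      rw [hdh, hcg] at this; linarith
    · exfalso
      have ha : a = (r:ℤ) := by omega
      have k1 : 2*(2*c + (r:ℤ)*d) = -2 := by linear_combination -key1
      have k2 : 2*(2*g + (r:ℤ)*h) = -2 := by linear_combination -key2
      have hdh : d + h = 6 := by omega
      have hcg : c + g = 2 - 3*(r:ℤ) := by omega
      have : 2*(2*(c+g) + (r:ℤ)*(d+h)) = -4 := by linear_combination k1 + k2
      rw [hdh, hcg] at this; linarith

/-- Classification of toric systems of length 4 on the Hirzebruch surface `F_r`:
every toric system of length 4 coincides, up to cyclic rotation and/or reversal,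
with some `A_{r,i}`, or (if `r` is even) possibly with some `Ã_{r,i}`; and
conversely all `A_{r,i}` and (for even `r`) all `Ã_{r,i}` are toric systems. -/
theorem hirzebruch_toricSystem_classification (r : ℕ) :
    (∀ A₁ A₂ A₃ A₄ : ℤ × ℤ, IsToricSystemFour r A₁ A₂ A₃ A₄ →
      (∃ i : ℤ, DihedralEq A₁ A₂ A₃ A₄ (hirzSysA r i).1 (hirzSysA r i).2.1
        (hirzSysA r i).2.2.1 (hirzSysA r i).2.2.2) ∨
      (∃ s i : ℤ, (r : ℤ) = 2 * s ∧ DihedralEq A₁ A₂ A₃ A₄ (hirzSysB s i).1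
        (hirzSysB s i).2.1 (hirzSysB s i).2.2.1 (hirzSysB s i).2.2.2)) ∧
    (∀ i : ℤ, IsToricSystemFour r (hirzSysA r i).1 (hirzSysA r i).2.1
      (hirzSysA r i).2.2.1 (hirzSysA r i).2.2.2) ∧
    (∀ s i : ℤ, (r : ℤ) = 2 * s → IsToricSystemFour r (hirzSysB s i).1
      (hirzSysB s i).2.1 (hirzSysB s i).2.2.1 (hirzSysB s i).2.2.2) := by
  refine ⟨?_, ?_, ?_⟩
  · rintro ⟨a, b⟩ ⟨c, d⟩ ⟨e, f⟩ ⟨g, h⟩ hts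
    obtain ⟨h12, h23, h34, h41, h13, h24, hsum⟩ := hts
    simp only [hirzForm] at h12 h23 h34 h41 h13 h24
    rw [Prod.ext_iff] at hsum
    simp only [hirzCanon, Prod.fst, Prod.snd] at hsum
    obtain ⟨hsum1, hsum2⟩ := hsum
    norm_num at hsum1 hsum2
    by_cases hdet : c * h - d * g = 0
    · -- A₂ = A₄ : reduce to rotated system
      have hhd : h = d := by linear_combination d*h41 - h*h12 + b*hdet
      have hcg : c = g := by
        rcases eq_or_ne d 0 with hd0 | hd0
        · have h0 : h = 0 := by omega
          have e1 : b * c = 1 := by rw [hd0] at h12; linear_combination h12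
          have e2 : b * g = 1 := by rw [h0] at h41; linear_combination h41
          have hb : b ≠ 0 := by rintro rfl; simp at e1
          have : b * (c - g) = 0 := by ring_nf; linear_combination e1 - e2
          rcases mul_eq_zero.mp this with h' | h'
          · exact absurd h' hb
          · omega
        · have : d * (c - g) = 0 := by rw [hhd] at hdet; linarith
          rcases mul_eq_zero.mp this with h' | h'
          · exact absurd h' hd0
          · omega
      have := main13 r c d e f a b
        (by linear_combination h23)
        (by linear_combination h41 + b*hcg - (a + (r:ℤ)*b)*hhd)
        (by linear_combination h24 + d*hcg - (c + (r:ℤ)*d)*hhd)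
        (by omega) (by omega)
      rcases this with ⟨i, hc, hd, he, hf, ha, hb⟩ | ⟨s, i, hr, hc, hd, he, hf, ha, hb⟩
      · refine Or.inl ⟨i, Or.inr <| Or.inr <| Or.inr <| Or.inl ?_⟩
        have hg1 : g = 1 := by omega
        have hh1 : h = 0 := by omega
        simp only [hirzSysA, Prod.mk.injEq]
        exact ⟨⟨ha, hb⟩, ⟨hc, hd⟩, ⟨he, hf⟩, hg1, hh1⟩
      · refine Or.inr ⟨s, i, hr, Or.inr <| Or.inr <| Or.inr <| Or.inl ?_⟩
        have hg1 : g = -s := by omega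
        have hh1 : h = 1 := by omega
        simp only [hirzSysB, Prod.mk.injEq]
        exact ⟨⟨ha, hb⟩, ⟨hc, hd⟩, ⟨he, hf⟩, hg1, hh1⟩
    · -- A₁ = A₃
      have hu1 : (b - f) * (c*h - d*g) = 0 := by
        linear_combination h*h12 - h*h23 - d*h41 + d*h34
      have hbf : b = f := by
        rcases mul_eq_zero.mp hu1 with h' | h'
        · omega
        · exact absurd h' hdet
      subst hbf
      have hu2' : ((a - e) + (r:ℤ)*(b - b)) * (c*h - d*g) = 0 := by
        linear_combination c*h41 - c*h34 - g*h12 + g*h23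
      have hu2 : (a - e) * (c*h - d*g) = 0 := by linear_combination hu2'
      have hae : a = e := by
        rcases mul_eq_zero.mp hu2 with h' | h'
        · omega
        · exact absurd h' hdet
      subst hae
      have := main13 r a b c d g h
        (by linear_combination h12)
        (by linear_combination h34)
        (by linear_combination h13)
        (by omega) (by omega)
      rcases this with ⟨i, ha, hb, hc, hd, hg, hh⟩ | ⟨s, i, hr, ha, hb, hc, hd, hg, hh⟩
      · refine Or.inl ⟨i, Or.inl ?_⟩
        simp only [hirzSysA, Prod.mk.injEq]
        exact ⟨⟨ha, hb⟩, ⟨hc, hd⟩, ⟨ha, hb⟩, hg, hh⟩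
      · refine Or.inr ⟨s, i, hr, Or.inl ?_⟩
        have hg' : g = 1 + i * s := by omega
        simp only [hirzSysB, Prod.mk.injEq]
        exact ⟨⟨ha, hb⟩, ⟨hc, hd⟩, ⟨ha, hb⟩, hg', hh⟩
  · intro i
    refine ⟨?_, ?_, ?_, ?_, ?_, ?_, ?_⟩ <;>
      simp [hirzForm, hirzCanon, hirzSysA, Prod.ext_iff] <;> first | ring1 | (constructor <;> ring1) | simp
  · intro s i hr
    refine ⟨?_, ?_, ?_, ?_, ?_, ?_, ?_⟩ <;>
      simp [hirzForm, hirzCanon, hirzSysB, Prod.ext_iff, hr] <;> first | ring1 | (constructor <;> ring1) | simp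
end

section
/- In (L, B, k) as below, set H = D₁ + D₂ + D₃ + D₇ = D₃ + D₄ + D₅, R₁ = D₃, R₂ = D₁ + D₇, R₃ = D₅, R₄ = D₇. Then (H, R₁, R₂, R₃, R₄) is a ℤ-basis of L, the Gram matrix of B in this basis is diagonal with diagonal (1, −1, −1, −1, −1), and −k = 3H − R₁ − R₂ − R₃ − R₄. (This is a good basis of the Picard lattice of X = TV(−2,−1,−1,−1,−1,−2,−1).) -/
/- The Picard lattice of the toric surface `X = TV(-2,-1,-1,-1,-1,-2,-1)`:
`L = ℤ⁵` with basis `(D₂, D₃, D₄, D₅, D₇)` and the intersection pairing given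
by the Gram matrix below; `D₁ = -D₂ + D₄ + D₅ - D₇`, `D₆ = D₂ + D₃ - D₅ - D₇`,
and the canonical class is `k = -(D₁ + ⋯ + D₇)`. -/

/-- Gram matrix of the intersection pairing in the basis `(D₂, D₃, D₄, D₅, D₇)`. -/
def gram : Matrix (Fin 5) (Fin 5) ℤ :=
  !![-1, 1, 0, 0, 0;
      1, -1, 1, 0, 0;
      0, 1, -1, 1, 0;
      0, 0, 1, -1, 0;
      0, 0, 0, 0, -1]

/-- The intersection pairing on `L = ℤ⁵`. -/
def picForm (x y : Fin 5 → ℤ) : ℤ := dotProduct x (gram.mulVec y)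

def vD2 : Fin 5 → ℤ := ![1, 0, 0, 0, 0]
def vD3 : Fin 5 → ℤ := ![0, 1, 0, 0, 0]
def vD4 : Fin 5 → ℤ := ![0, 0, 1, 0, 0]
def vD5 : Fin 5 → ℤ := ![0, 0, 0, 1, 0]
def vD7 : Fin 5 → ℤ := ![0, 0, 0, 0, 1]
def vD1 : Fin 5 → ℤ := -vD2 + vD4 + vD5 - vD7
def vD6 : Fin 5 → ℤ := vD2 + vD3 - vD5 - vD7

/-- The canonical class `k = -(D₁ + D₂ + D₃ + D₄ + D₅ + D₆ + D₇)`. -/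
def vK : Fin 5 → ℤ := -(vD1 + vD2 + vD3 + vD4 + vD5 + vD6 + vD7)

/-- The good basis `(H, R₁, R₂, R₃, R₄)` with `H = D₁ + D₂ + D₃ + D₇`,
`R₁ = D₃`, `R₂ = D₁ + D₇`, `R₃ = D₅`, `R₄ = D₇`. -/
def goodBasis : Fin 5 → Fin 5 → ℤ :=
  ![vD1 + vD2 + vD3 + vD7, vD3, vD1 + vD7, vD5, vD7]

/- The vectors `H, R₁, …, R₄` are the rows of an integer matrix `P` of determinant `1`, so they
form a ℤ-basis of `ℤ⁵`, and the Gram matrix of the pairing in this basis is `P G Pᵀ`; both facts,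
like the two identities between divisor classes, reduce to finite integer computations. -/

theorem Pi.exists_basis_of_isUnit_det {n R : Type*} [CommRing R] [Fintype n] [DecidableEq n]
    {v : n → n → R} (h : IsUnit (Matrix.of v).det) :
    ∃ b : Module.Basis n R (n → R), ∀ i, b i = v i := by
  have hdet : IsUnit ((Pi.basisFun R n).det v) := by
    rwa [Module.Basis.det_apply, ← Matrix.det_transpose]
  obtain ⟨hli, hspan⟩ := (Pi.basisFun R n).is_basis_iff_det.mpr hdet
  exact ⟨.mk hli hspan.ge, Module.Basis.mk_apply hli hspan.ge⟩

namespace Matrix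

theorem dotProduct_mulVec_eq_mul_mul_transpose_apply {m n R : Type*} [CommSemiring R]
    [Fintype n] (P : Matrix m n R) (G : Matrix n n R) (i j : m) :
    P i ⬝ᵥ G *ᵥ P j = (P * G * Pᵀ) i j := by
  simp only [mul_apply, dotProduct, mulVec, transpose_apply, Finset.mul_sum, Finset.sum_mul,
    mul_assoc]
  exact Finset.sum_comm

end Matrix

theorem goodBasis_det : (Matrix.of goodBasis).det = 1 := by
  decide +kernel

theorem goodBasis_mul_gram_mul_transpose :
    Matrix.of goodBasis * gram * (Matrix.of goodBasis).transpose =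
      Matrix.diagonal ![1, -1, -1, -1, -1] := by
  decide +kernel

theorem picForm_goodBasis (i j : Fin 5) :
    picForm (goodBasis i) (goodBasis j) = Matrix.diagonal ![1, -1, -1, -1, -1] i j := by
  rw [← goodBasis_mul_gram_mul_transpose]
  exact (Matrix.of goodBasis).dotProduct_mulVec_eq_mul_mul_transpose_apply gram i j

theorem vD1_add_vD2_add_vD3_add_vD7 : vD1 + vD2 + vD3 + vD7 = vD3 + vD4 + vD5 := by
  decide +kernel

theorem neg_vK_eq_goodBasis :
    -vK = 3 • goodBasis 0 - goodBasis 1 - goodBasis 2 - goodBasis 3 - goodBasis 4 := by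
  decide +kernel

/-- `(H, R₁, R₂, R₃, R₄)` is a ℤ-basis of `L` in which the intersection pairing
has diagonal Gram matrix `(1, -1, -1, -1, -1)`; moreover
`H = D₃ + D₄ + D₅` and `-k = 3H - R₁ - R₂ - R₃ - R₄`. (This is a good basis of
the Picard lattice of `X = TV(-2,-1,-1,-1,-1,-2,-1)`.) -/
theorem goodBasis_of_picardLattice :
    vD1 + vD2 + vD3 + vD7 = vD3 + vD4 + vD5 ∧
    (∃ b : Module.Basis (Fin 5) ℤ (Fin 5 → ℤ), ∀ i, b i = goodBasis i) ∧
    (∀ i j, picForm (goodBasis i) (goodBasis j) =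
      if i = j then (if i = 0 then 1 else -1) else 0) ∧
    -vK = 3 • goodBasis 0 - goodBasis 1 - goodBasis 2 - goodBasis 3 - goodBasis 4 := by
  refine ⟨vD1_add_vD2_add_vD3_add_vD7, ?_, fun i j => ?_, neg_vK_eq_goodBasis⟩
  · exact Pi.exists_basis_of_isUnit_det (goodBasis_det ▸ isUnit_one)
  · rw [picForm_goodBasis, Matrix.diagonal_apply]
    fin_cases i <;> rfl
end

section
/- In (L, B, k) as below, let E₁ = 0 and E_{j+1} = E_j + A_j for j = 1, …, 6, where (A₁, …, A₇) has coordinate vectors A₁ = (0,−1,0,0,1), A₂ = (1,1,0,0,−1), A₃ = (−1,0,1,1,0), A₄ = (1,1,0,−1,0), A₅ = (0,0,1,1,−1), A₆ = (0,0,−1,0,1), A₇ = (0,1,1,0,−1) in the basis (D₂, D₃, D₄, D₅, D₇); explicitly E = (E₁,…,E₇) has coordinate vectors (0,0,0,0,0), (0,−1,0,0,1), (1,0,0,0,0), (0,0,1,1,0), (1,1,1,0,0), (1,1,2,1,−1), (1,1,1,1,0). Let C = D₆ = D₂ + D₃ − D₅ − D₇, so B(C,C) = −2 and B(C,k) = 0.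 Then B(C, E_j) ∈ {0, 1} for every j = 1, …, 7, and the reflection s_C : x ↦ x + B(C,x)·C maps (E₁, …, E₇) to the sequence with coordinate vectors (0,0,0,0,0), (1,0,0,−1,0), (1,0,0,0,0), (1,1,1,0,−1), (1,1,1,0,0), (1,1,2,1,−1), (2,2,1,0,−1). (This is the action on Picard classes of the spherical twist along the (−2)-curve, mapping the non-constructible exceptional sequence E to a constructible one.) -/
/-- The non-constructible exceptional toric system `A = (A₁, …, A₇)`, given by
its coordinate vectors in the basis `(D₂, D₃, D₄, D₅, D₇)`. -/
def exSys : Fin 7 → Fin 5 → ℤ :=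
  ![![0, -1, 0, 0, 1], ![1, 1, 0, 0, -1], ![-1, 0, 1, 1, 0], ![1, 1, 0, -1, 0],
    ![0, 0, 1, 1, -1], ![0, 0, -1, 0, 1], ![0, 1, 1, 0, -1]]

/-- The explicit coordinate vectors of the exceptional sequence
`E = (E₁, …, E₇)`. -/
def exSeq : Fin 7 → Fin 5 → ℤ :=
  ![![0, 0, 0, 0, 0], ![0, -1, 0, 0, 1], ![1, 0, 0, 0, 0], ![0, 0, 1, 1, 0],
    ![1, 1, 1, 0, 0], ![1, 1, 2, 1, -1], ![1, 1, 1, 1, 0]]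

/-- The explicit coordinate vectors of the image of `E` under the reflection
`s_C` (the action of the spherical twist along the `(-2)`-curve `C = D₆`). -/
def twistedSeq : Fin 7 → Fin 5 → ℤ :=
  ![![0, 0, 0, 0, 0], ![1, 0, 0, -1, 0], ![1, 0, 0, 0, 0], ![1, 1, 1, 0, -1],
    ![1, 1, 1, 0, 0], ![1, 1, 2, 1, -1], ![2, 2, 1, 0, -1]]

theorem Fin.eq_of_forall_succ_eq_add {M : Type*} [Add M] {n : ℕ} {E F : Fin (n + 1) → M}
    (a : Fin n → M) (h0 : E 0 = F 0) (hE : ∀ j, E j.succ = E j.castSucc + a j)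
    (hF : ∀ j, F j.succ = F j.castSucc + a j) : E = F :=
  funext fun j => Fin.induction h0 (fun j ih => by rw [hE, hF, ih]) j

theorem exSeq_succ (j : Fin 6) : exSeq j.succ = exSeq j.castSucc + exSys j.castSucc := by
  revert j; decide

-- `gram *ᵥ vD6 = Pi.single 3 1 + Pi.single 4 1`.
theorem picForm_vD6 (x : Fin 5 → ℤ) : picForm vD6 x = x 3 + x 4 := by
  simp [picForm, gram, vD6, vD2, vD3, vD5, vD7, dotProduct, Matrix.mulVec, Fin.sum_univ_five]
  ring

/-- Let `E₁ = 0` and `E_{j+1} = E_j + A_j`. Then `E` has the explicit coordinate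
vectors `exSeq`; the class `C = D₆` satisfies `B(C,C) = -2` and `B(C,k) = 0`;
`B(C, E_j) ∈ {0, 1}` for all `j`; and the reflection `s_C : x ↦ x + B(C,x)·C`
maps `(E₁, …, E₇)` to the explicit sequence `twistedSeq`. (This is the action on
Picard classes of the spherical twist along the `(-2)`-curve `D₆`, mapping the
non-constructible exceptional sequence `E` to a constructible one.) -/
theorem sphericalTwist_on_exceptional_sequence
    (E : Fin 7 → Fin 5 → ℤ) (hE0 : E 0 = 0)
    (hEstep : ∀ j : Fin 6, E j.succ = E j.castSucc + exSys j.castSucc) :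
    (∀ j, E j = exSeq j) ∧
    picForm vD6 vD6 = -2 ∧ picForm vD6 vK = 0 ∧
    (∀ j, picForm vD6 (E j) = 0 ∨ picForm vD6 (E j) = 1) ∧
    (∀ j, E j + picForm vD6 (E j) • vD6 = twistedSeq j) := by
  obtain rfl : E = exSeq :=
    Fin.eq_of_forall_succ_eq_add _ (by rw [hE0]; decide) hEstep exSeq_succ
  refine ⟨fun _ => rfl, ?_⟩
  simp only [picForm_vD6]
  decide
end
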